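/- arXiv:1805.05196 — 11 statements merged into one kernel-verified Lean document; each statement's English description precedes it below -/
import Mathlib

section
/- If a permutation p of length n avoids both patterns 123 and 231 and is not an involution, then there exist positive integers a, b, c with a+b+c=n such that p = n (n-1) ... (n-a+1) b (b-1) ... 1 (b+c) (b+c-1) ... (b+1); that is, p consists of three decreasing layers: the a largest entries in decreasing order, then the b smallest entries in decreasing order, then the remaining c entries in decreasing order. -/
/-!
Let `u` be the position of the entry `0`. Avoiding 231 forces `p` to decrease up to `u`, and
avoiding 123 forces it to decrease after `u`. If `u` is the last position, `p` is the reversal,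
an involution. Otherwise let `β` be the last entry. By 231-avoidance every entry before `u` that
exceeds `β` exceeds the whole tail, so the tail takes the values just above `β`, the entries below
`β` fill a final block of the prefix, and the remaining prefix takes the largest values. On each
of these blocks `p` is a decreasing bijection between two intervals, hence order-reversing. If the
block of largest values is empty, `p` is a two-layer involution.
-/

/-- A permutation of {1,...,n} is cyclic (a single n-cycle) iff it acts transitively. -/
def IsCyclicPerm {n : ℕ} (p : Equiv.Perm (Fin n)) : Prop :=
  ∀ x y : Fin n, ∃ m : ℕ, (p ^ m) x = y

/-- `p` contains the pattern `q` (given as a word `q 0, q 1, ...`). -/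
def Contains {n k : ℕ} (p : Equiv.Perm (Fin n)) (q : Fin k → Fin k) : Prop :=
  ∃ f : Fin k → Fin n, StrictMono f ∧ ∀ i j : Fin k, q i < q j ↔ p (f i) < p (f j)

def Avoids {n k : ℕ} (p : Equiv.Perm (Fin n)) (q : Fin k → Fin k) : Prop :=
  ¬ Contains p q

def pat123 : Fin 3 → Fin 3 := ![0, 1, 2]
def pat231 : Fin 3 → Fin 3 := ![1, 2, 0]
def pat132 : Fin 3 → Fin 3 := ![0, 2, 1]
def pat321 : Fin 3 → Fin 3 := ![2, 1, 0]
def pat312 : Fin 3 → Fin 3 := ![2, 0, 1]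

/-- `p` is the three-layer permutation of the triple `(a,b,c)`, in 0-based form:
`p_i = n+1-i` for `1 ≤ i ≤ a`, `p_i = a+b+1-i` for `a+1 ≤ i ≤ a+b`,
`p_i = n+b+1-i` for `a+b+1 ≤ i ≤ n` (1-based). -/
def IsTriplePerm (n a b : ℕ) (p : Equiv.Perm (Fin n)) : Prop :=
  ∀ i : Fin n, (p i : ℕ) =
    if (i : ℕ) < a then n - 1 - (i : ℕ)
    else if (i : ℕ) < a + b then a + b - 1 - (i : ℕ)
    else n + b - 1 - (i : ℕ)

open Finset

variable {n : ℕ} {p : Equiv.Perm (Fin n)}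

theorem contains_pat123 {i j k : Fin n} (hij : i < j) (hjk : j < k) (h₁ : p i < p j)
    (h₂ : p j < p k) : Contains p pat123 := by
  refine ⟨![i, j, k], Fin.strictMono_iff_lt_succ.2 fun m => ?_, fun x y => ?_⟩
  · fin_cases m <;> simpa
  · fin_cases x <;> fin_cases y <;>
      simp [pat123, h₁, h₂, h₁.trans h₂, h₁.le, h₂.le, (h₁.trans h₂).le]

theorem contains_pat231 {i j k : Fin n} (hij : i < j) (hjk : j < k) (h₁ : p k < p i)
    (h₂ : p i < p j) : Contains p pat231 := by
  refine ⟨![i, j, k], Fin.strictMono_iff_lt_succ.2 fun m => ?_, fun x y => ?_⟩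
  · fin_cases m <;> simpa
  · fin_cases x <;> fin_cases y <;>
      simp [pat231, h₁, h₂, h₁.trans h₂, h₁.le, h₂.le, (h₁.trans h₂).le]

theorem Fin.card_filter_le_val_and_val_lt {s e : ℕ} (he : e ≤ n) :
    #{i : Fin n | s ≤ (i : ℕ) ∧ (i : ℕ) < e} = e - s := by
  rw [← card_map Fin.valEmbedding, ← Nat.card_Ico]
  congr 1
  ext x
  simp only [mem_map, mem_filter, mem_univ, true_and, Fin.valEmbedding_apply, mem_Ico]
  constructor
  · rintro ⟨i, h, rfl⟩; exact h
  · intro h; exact ⟨⟨x, by omega⟩, h, rfl⟩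

namespace Avoids

theorem lt_of_pat123 (h : Avoids p pat123) {i j k : Fin n} (hij : i < j) (hjk : j < k)
    (hp : p i < p j) : p k < p j :=
  lt_of_le_of_ne (not_lt.1 fun hlt => h (contains_pat123 hij hjk hp hlt)) (p.injective.ne hjk.ne')

theorem lt_of_pat231 (h : Avoids p pat231) {i j k : Fin n} (hij : i < j) (hjk : j ≤ k)
    (hp : p k < p i) : p j < p i := by
  rcases hjk.eq_or_lt with rfl | hjk
  · exact hp
  · exact lt_of_le_of_ne (not_lt.1 fun hlt => h (contains_pat231 hij hjk hp hlt))
      (p.injective.ne hij.ne')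

end Avoids

theorem apply_lt_of_val_apply_eq_zero {u i : Fin n} (hu : (p u : ℕ) = 0) (hi : i ≠ u) :
    p u < p i := by
  have := Fin.val_ne_of_ne (p.injective.ne hi)
  rw [Fin.lt_def]
  omega

theorem Avoids.strictAntiOn_Iic (h : Avoids p pat231) {u : Fin n} (hu : (p u : ℕ) = 0) :
    StrictAntiOn p (Set.Iic u) := fun _ _ _ hj hij =>
  h.lt_of_pat231 hij hj (apply_lt_of_val_apply_eq_zero hu (hij.trans_le hj).ne)

theorem Avoids.strictAntiOn_Ioi (h : Avoids p pat123) {u : Fin n} (hu : (p u : ℕ) = 0) :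
    StrictAntiOn p (Set.Ioi u) := fun _ hi _ _ hij =>
  h.lt_of_pat123 hi hij (apply_lt_of_val_apply_eq_zero hu (ne_of_gt hi))

theorem Fin.add_sub_le_of_strictAntiOn {s e : ℕ} {g : Fin n → ℕ}
    (hg : StrictAntiOn g {i | s ≤ (i : ℕ) ∧ (i : ℕ) < e}) {i j : Fin n} (hsi : s ≤ (i : ℕ))
    (hij : i ≤ j) (hje : (j : ℕ) < e) : g j + (j - i) ≤ g i := by
  suffices ∀ d : ℕ, ∀ j : Fin n, (j : ℕ) = i + d → (j : ℕ) < e → g j + d ≤ g i by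
    have := this (j - i) j (by omega) hje
    omega
  intro d
  induction d with
  | zero => intro j hj _; simp [Fin.ext hj]
  | succ d ih =>
    intro j hj hje
    obtain ⟨k, hk⟩ : ∃ k : Fin n, (k : ℕ) = i + d := ⟨⟨i + d, by omega⟩, rfl⟩
    have hprev := ih k hk (by omega)
    have hstep := hg (a := k) ⟨by omega, by omega⟩ ⟨by omega, hje⟩ (by omega)
    omega

theorem Equiv.Perm.val_add_val_of_strictAntiOn {s e t t' : ℕ} (he : e ≤ n) (ht' : t' ≤ n)
    (hanti : StrictAntiOn p {i | s ≤ (i : ℕ) ∧ (i : ℕ) < e})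
    (hblock : ∀ i : Fin n, s ≤ (i : ℕ) ∧ (i : ℕ) < e ↔ t ≤ (p i : ℕ) ∧ (p i : ℕ) < t')
    {i : Fin n} (hsi : s ≤ (i : ℕ)) (hie : (i : ℕ) < e) : (p i : ℕ) + i + 1 = s + t' := by
  have hcard : e - s = t' - t := by
    rw [← Fin.card_filter_le_val_and_val_lt he, ← Fin.card_filter_le_val_and_val_lt ht']
    exact card_equiv p fun i => by simpa only [mem_filter, mem_univ, true_and] using hblock i
  obtain ⟨first, hfirst⟩ : ∃ j : Fin n, (j : ℕ) = s := ⟨⟨s, by omega⟩, rfl⟩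
  obtain ⟨last, hlast⟩ : ∃ j : Fin n, (j : ℕ) = e - 1 := ⟨⟨e - 1, by omega⟩, rfl⟩
  have hval := Fin.val_strictMono.comp_strictAntiOn hanti
  have hdesc₁ := Fin.add_sub_le_of_strictAntiOn hval (i := first) (by omega) (by omega) hie
  have hdesc₂ := Fin.add_sub_le_of_strictAntiOn hval hsi (j := last) (by omega) (by omega)
  have hfirst_lt := ((hblock first).1 ⟨by omega, by omega⟩).2
  have hlast_ge := ((hblock last).1 ⟨by omega, by omega⟩).1
  simp only [Function.comp_apply] at hdesc₁ hdesc₂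
  -- `p` drops by at least one per step from below `t'` at `s` to at least `t` at `e - 1`
  omega

theorem IsTriplePerm.mul_self_eq_one {b : ℕ} (h : IsTriplePerm n 0 b p) : p * p = 1 := by
  ext i
  have h₁ := h i
  have h₂ := h (p i)
  simp only [Equiv.Perm.mul_apply, Equiv.Perm.one_apply]
  split_ifs at h₁ h₂ <;> omega

theorem Avoids.isTriplePerm_of_min_last (h : Avoids p pat231) {u : Fin n} (hu : (p u : ℕ) = 0)
    (hlast : (u : ℕ) + 1 = n) : IsTriplePerm n 0 n p := by
  intro i
  have := p.val_add_val_of_strictAntiOn (s := 0) (e := n) (t := 0) le_rfl le_rfl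
    ((h.strictAntiOn_Iic hu).mono fun j _ => show j ≤ u by omega) (fun j => by omega)
    (Nat.zero_le _) i.isLt
  simp only [Nat.not_lt_zero, if_false, zero_add, i.isLt, if_true]
  omega

theorem val_apply_add_val_of_min_lt (h123 : Avoids p pat123) (h231 : Avoids p pat231)
    {u l : Fin n} (hu : (p u : ℕ) = 0) (hul : u < l) (hl : (l : ℕ) + 1 = n) {i : Fin n}
    (hi : u < i) :
    (p i : ℕ) + i + 1 = p l + n := by
  obtain ⟨k, hk⟩ : ∃ k : Fin n, (k : ℕ) = u + 1 := ⟨⟨u + 1, by omega⟩, rfl⟩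
  have hpost := (h123.strictAntiOn_Ioi hu).antitoneOn
  have hblock : ∀ j : Fin n,
      u + 1 ≤ (j : ℕ) ∧ (j : ℕ) < n ↔ p l ≤ (p j : ℕ) ∧ (p j : ℕ) < p k + 1 := by
    intro j
    constructor
    · rintro ⟨hj, -⟩
      have h₁ : p l ≤ p j := hpost (show u < j by omega) hul (by omega)
      have h₂ : p j ≤ p k := hpost (show u < k by omega) (show u < j by omega) (by omega)
      omega
    · rintro ⟨h₁, h₂⟩
      by_contra hj
      have hlj : p l < p j := lt_of_le_of_ne h₁ (p.injective.ne fun h => by omega)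
      have := h231.lt_of_pat231 (show j < k by omega) (show k ≤ l by omega) hlj
      omega
  have hanti := (h123.strictAntiOn_Ioi hu).mono fun j (hj : u + 1 ≤ (j : ℕ) ∧ (j : ℕ) < n) =>
    show u < j by omega
  have hlval := p.val_add_val_of_strictAntiOn le_rfl (p k).isLt hanti hblock (by omega) l.isLt
  have hival := p.val_add_val_of_strictAntiOn le_rfl (p k).isLt hanti hblock (by omega) i.isLt
  omega

theorem exists_isTriplePerm_of_min_lt_last (h123 : Avoids p pat123) (h231 : Avoids p pat231)
    {u : Fin n} (hu : (p u : ℕ) = 0) (hlt : (u : ℕ) + 1 < n) :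
    ∃ a b : ℕ, 0 < b ∧ a + b = (u : ℕ) + 1 ∧ IsTriplePerm n a b p := by
  obtain ⟨l, hl⟩ : ∃ l : Fin n, (l : ℕ) = n - 1 := ⟨⟨n - 1, by omega⟩, rfl⟩
  obtain ⟨k, hk⟩ : ∃ k : Fin n, (k : ℕ) = u + 1 := ⟨⟨u + 1, by omega⟩, rfl⟩
  have hul : u < l := by omega
  have htail := fun (i : Fin n) (hi : u < i) =>
    val_apply_add_val_of_min_lt h123 h231 hu hul (by omega) hi
  have hpre := h231.strictAntiOn_Iic hu
  have hβ : p u < p l := apply_lt_of_val_apply_eq_zero hu hul.ne'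
  obtain ⟨a, ha : p a < p l, hamin⟩ := wellFounded_lt.has_min {i | p i < p l} ⟨u, hβ⟩
  replace hamin : ∀ i, p i < p l → a ≤ i := fun i hi => not_lt.1 (hamin i hi)
  have hau : a ≤ u := hamin u hβ
  have hmid : ∀ i : Fin n, a ≤ i → i ≤ u → (p i : ℕ) + i + 1 = (a : ℕ) + p l := by
    refine fun i hai hiu => p.val_add_val_of_strictAntiOn (t := 0) (by omega) (p l).isLt.le
      (hpre.mono fun j (hj : (a : ℕ) ≤ j ∧ (j : ℕ) < u + 1) => show j ≤ u by omega)
      (fun j => ⟨fun hj => ?_, fun hj => ?_⟩) hai (by omega)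
    · have : p j ≤ p a := hpre.antitoneOn hau (show j ≤ u by omega) hj.1
      exact ⟨Nat.zero_le _, by omega⟩
    · refine ⟨hamin j hj.2, ?_⟩
      by_contra hju
      have := htail j (by omega)
      omega
  have hhead : ∀ i : Fin n, (i : ℕ) < a → (p i : ℕ) + i + 1 = n := by
    refine fun i hia => (p.val_add_val_of_strictAntiOn (s := 0) (t := p k + 1) (by omega) le_rfl
      (hpre.mono fun j (hj : 0 ≤ (j : ℕ) ∧ (j : ℕ) < a) => show j ≤ u by omega)
      (fun j => ⟨fun hj => ?_, fun hj => ?_⟩) (Nat.zero_le _) hia).trans (zero_add n)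
    · have hlj : p l < p j := lt_of_le_of_ne (not_lt.1 fun h => by have := hamin j h; omega)
        (p.injective.ne fun h => by omega)
      have := h231.lt_of_pat231 (show j < k by omega) (show k ≤ l by omega) hlj
      exact ⟨this, (p j).isLt⟩
    · have hk' := htail k (by omega)
      by_cases hju : j ≤ u
      · by_contra hja
        have := hmid j (by omega) hju
        omega
      · have := htail j (by omega)
        omega
  have hab : (a : ℕ) + p l = u + 1 := by have := hmid u hau le_rfl; omega
  refine ⟨a, p l, by omega, hab, fun i => ?_⟩
  split_ifs with h₁ h₂
  · have := hhead i h₁; omega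
  · have := hmid i (by omega) (by omega); omega
  · have := htail i (by omega); omega

theorem stmt0 (n : ℕ) (p : Equiv.Perm (Fin n))
    (h123 : Avoids p pat123) (h231 : Avoids p pat231) (hinv : p * p ≠ 1) :
    ∃ a b c : ℕ, 0 < a ∧ 0 < b ∧ 0 < c ∧ a + b + c = n ∧ IsTriplePerm n a b p := by
  rcases Nat.eq_zero_or_pos n with rfl | hn
  · exact absurd (Subsingleton.elim _ _) hinv
  obtain ⟨u, hu⟩ : ∃ u, (p u : ℕ) = 0 := ⟨p.symm ⟨0, hn⟩, by simp⟩
  rcases (Nat.succ_le_of_lt u.isLt).lt_or_eq with hlt | hlast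
  · obtain ⟨a, b, hb, hab, hp⟩ := exists_isTriplePerm_of_min_lt_last h123 h231 hu hlt
    rcases Nat.eq_zero_or_pos a with rfl | ha
    · exact absurd hp.mul_self_eq_one hinv
    · exact ⟨a, b, n - (u + 1), ha, hb, by omega, by omega, hp⟩
  · exact absurd (h231.isTriplePerm_of_min_last hu hlast).mul_self_eq_one hinv
end

section
/- The number of permutations of length n that avoid both patterns 123 and 231 equals 1 + C(n,2) (where C(n,2) is the binomial coefficient n choose 2). -/
/-!
For an avoider `p`, whenever `i < j < k` and `p i < p j`, the value `p k` lies strictly between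
`p i` and `p j`. So either `p` is decreasing, or, taking `y` the first index that ends an ascent
and `x` the first index with `p x < p y`, the ascents of `p` are exactly the pairs `i < j` with
`x ≤ i < y ≤ j`. A permutation is determined by its set of ascents, and each pair `x < y` is
realised by the permutation that decreases on each of the blocks `[0, x)`, `[x, y)`, `[y, n)`
and puts the first block on top and the second at the bottom. Hence the avoiders are the
decreasing permutation together with one permutation for each of the `n.choose 2` pairs `x < y`.
-/

section

variable {n : ℕ}

theorem Equiv.Perm.eq_of_lt_iff_lt {α : Type*} [LinearOrder α] [Finite α] {σ τ : Equiv.Perm α}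
    (h : ∀ ⦃i j⦄, i < j → (σ i < σ j ↔ τ i < τ j)) : σ = τ := by
  have hmono : StrictMono (σ ∘ τ.symm) := by
    intro a b hab
    rcases lt_trichotomy (τ.symm a) (τ.symm b) with hlt | heq | hgt
    · simpa using (h hlt).2 (by simpa using hab)
    · exact absurd (τ.symm.injective heq) hab.ne
    · have := mt (h hgt).1 (by simpa using hab.asymm)
      exact lt_of_le_of_ne (not_lt.1 this) (σ.injective.ne (τ.symm.injective.ne hab.ne))
  ext1 i
  simpa using congrFun hmono.eq_id (τ i)

theorem Equiv.Perm.eq_revPerm_of_strictAnti {p : Equiv.Perm (Fin n)} (hp : StrictAnti p) :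
    p = Fin.revPerm :=
  DFunLike.coe_injective <| (hp.range_inj Fin.rev_strictAnti).1 <| by
    simp [Set.range_eq_univ.2 p.surjective, Set.range_eq_univ.2 Fin.rev_surjective]

theorem contains_pat123_iff (p : Equiv.Perm (Fin n)) :
    Contains p pat123 ↔ ∃ i j k, i < j ∧ j < k ∧ p i < p j ∧ p j < p k := by
  constructor
  · rintro ⟨f, hf, hq⟩
    exact ⟨f 0, f 1, f 2, hf (by decide), hf (by decide),
      (hq 0 1).1 (by decide), (hq 1 2).1 (by decide)⟩
  · rintro ⟨i, j, k, hij, hjk, hpij, hpjk⟩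
    refine ⟨![i, j, k], Fin.strictMono_iff_lt_succ.2 ?_, ?_⟩
    · simp [Fin.forall_fin_two, hij, hjk]
    · intro a b
      fin_cases a <;> fin_cases b <;> simp [pat123] <;> order

theorem contains_pat231_iff (p : Equiv.Perm (Fin n)) :
    Contains p pat231 ↔ ∃ i j k, i < j ∧ j < k ∧ p k < p i ∧ p i < p j := by
  constructor
  · rintro ⟨f, hf, hq⟩
    exact ⟨f 0, f 1, f 2, hf (by decide), hf (by decide),
      (hq 2 0).1 (by decide), (hq 0 1).1 (by decide)⟩
  · rintro ⟨i, j, k, hij, hjk, hpki, hpij⟩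
    refine ⟨![i, j, k], Fin.strictMono_iff_lt_succ.2 ?_, ?_⟩
    · simp [Fin.forall_fin_two, hij, hjk]
    · intro a b
      fin_cases a <;> fin_cases b <;> simp [pat231] <;> order

theorem avoids_pat123_and_pat231_iff_forall (p : Equiv.Perm (Fin n)) :
    Avoids p pat123 ∧ Avoids p pat231 ↔
      ∀ i j k, i < j → j < k → p i < p j → p i < p k ∧ p k < p j := by
  rw [Avoids, Avoids, contains_pat123_iff, contains_pat231_iff]
  constructor
  · rintro ⟨h123, h231⟩ i j k hij hjk hpij
    exact ⟨lt_of_le_of_ne (not_lt.1 fun hpki => h231 ⟨i, j, k, hij, hjk, hpki, hpij⟩)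
        (p.injective.ne (hij.trans hjk).ne),
      lt_of_le_of_ne (not_lt.1 fun hpjk => h123 ⟨i, j, k, hij, hjk, hpij, hpjk⟩)
        (p.injective.ne hjk.ne')⟩
  · intro H
    constructor
    · rintro ⟨i, j, k, hij, hjk, hpij, hpjk⟩
      exact (H i j k hij hjk hpij).2.asymm hpjk
    · rintro ⟨i, j, k, hij, hjk, hpki, hpij⟩
      exact (H i j k hij hjk hpij).1.asymm hpki

def IsLayered (p : Equiv.Perm (Fin n)) (x y : Fin n) : Prop :=
  ∀ ⦃i j⦄, i < j → (p i < p j ↔ x ≤ i ∧ i < y ∧ y ≤ j)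

theorem IsLayered.eq {p q : Equiv.Perm (Fin n)} {x y : Fin n} (hp : IsLayered p x y)
    (hq : IsLayered q x y) : p = q :=
  Equiv.Perm.eq_of_lt_iff_lt fun _ _ hij => (hp hij).trans (hq hij).symm

theorem IsLayered.le_of_le {p : Equiv.Perm (Fin n)} {x y x' y' : Fin n} (hxy : x < y)
    (h : IsLayered p x y) (h' : IsLayered p x' y') : x' ≤ x ∧ y' ≤ y := by
  obtain ⟨hx, -, hy⟩ := (h' hxy).1 ((h hxy).2 ⟨le_rfl, hxy, le_rfl⟩)
  exact ⟨hx, hy⟩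

theorem IsLayered.not_strictAnti {p : Equiv.Perm (Fin n)} {x y : Fin n} (hxy : x < y)
    (h : IsLayered p x y) : ¬ StrictAnti p :=
  fun hp => (hp hxy).asymm ((h hxy).2 ⟨le_rfl, hxy, le_rfl⟩)

theorem IsLayered.interpolates {p : Equiv.Perm (Fin n)} {x y : Fin n} (h : IsLayered p x y) :
    ∀ i j k, i < j → j < k → p i < p j → p i < p k ∧ p k < p j := by
  intro i j k hij hjk hpij
  obtain ⟨hxi, hiy, hyj⟩ := (h hij).1 hpij
  refine ⟨(h (hij.trans hjk)).2 ⟨hxi, hiy, hyj.trans hjk.le⟩, ?_⟩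
  exact lt_of_le_of_ne (not_lt.1 fun hpjk => ((h hjk).1 hpjk).2.1.not_ge hyj)
    (p.injective.ne hjk.ne')

theorem strictAnti_or_exists_isLayered {p : Equiv.Perm (Fin n)}
    (H : ∀ i j k, i < j → j < k → p i < p j → p i < p k ∧ p k < p j) :
    StrictAnti p ∨ ∃ x y, x < y ∧ IsLayered p x y := by
  refine or_iff_not_imp_left.2 fun hanti => ?_
  have hasc : {j | ∃ i, i < j ∧ p i < p j}.Nonempty := by
    simp only [StrictAnti, not_forall] at hanti
    obtain ⟨i, j, hij, hpji⟩ := hanti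
    exact ⟨j, i, hij, lt_of_le_of_ne (not_lt.1 hpji) (p.injective.ne hij.ne)⟩
  obtain ⟨y, ⟨x₀, hx₀y, hpx₀⟩, hymin⟩ := wellFounded_lt.has_min _ hasc
  obtain ⟨x, hpx, hxmin⟩ := wellFounded_lt.has_min {i | p i < p y} ⟨x₀, hpx₀⟩
  have hxy : x < y := (not_lt.1 (hxmin x₀ hpx₀)).trans_lt hx₀y
  have hdesc : ∀ i j, i < j → j < y → p j < p i := fun i j hij hjy =>
    lt_of_le_of_ne (not_lt.1 fun hpij => hymin j ⟨i, hij, hpij⟩ hjy) (p.injective.ne hij.ne')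
  have hlt_y : ∀ i, x ≤ i → i < y → p i < p y := by
    intro i hxi hiy
    rcases hxi.eq_or_lt with rfl | hxi
    · exact hpx
    · exact (hdesc x i hxi hiy).trans hpx
  refine ⟨x, y, hxy, fun i j hij => ⟨fun hpij => ?_, fun ⟨hxi, hiy, hyj⟩ => ?_⟩⟩
  · have hyj : y ≤ j := not_lt.1 (hymin j ⟨i, hij, hpij⟩)
    have hiy : i < y := by
      refine lt_of_not_ge fun hyi => ?_
      have hpxi : p x < p i := by
        rcases hyi.eq_or_lt with rfl | hyi
        · exact hpx
        · exact (H x y i hxy hyi hpx).1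
      exact (H x i j (hxy.trans_le hyi) hij hpxi).2.asymm hpij
    have hpiy : p i < p y := by
      rcases hyj.eq_or_lt with rfl | hyj
      · exact hpij
      · exact hpij.trans (H x y j hxy hyj hpx).2
    exact ⟨not_lt.1 (hxmin i hpiy), hiy, hyj⟩
  · rcases hyj.eq_or_lt with rfl | hyj
    · exact hlt_y i hxi hiy
    · exact (H i y j hiy hyj (hlt_y i hxi hiy)).1

theorem avoids_pat123_and_pat231_iff (p : Equiv.Perm (Fin n)) :
    Avoids p pat123 ∧ Avoids p pat231 ↔ StrictAnti p ∨ ∃ x y, x < y ∧ IsLayered p x y := by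
  rw [avoids_pat123_and_pat231_iff_forall]
  refine ⟨strictAnti_or_exists_isLayered, ?_⟩
  rintro (hp | ⟨x, y, -, hp⟩)
  · exact fun i j _ hij _ hpij => absurd hpij (hp hij).asymm
  · exact hp.interpolates

-- `y - x` truncates to `0` when `y ≤ x`; the map is then `i ↦ n - 1 - i`, a permutation too.
def layeredVal (n x y i : ℕ) : ℕ :=
  if i < x then n - 1 - i else if i < y then y - 1 - i else n + (y - x) - 1 - i

theorem layeredVal_lt {n x y i : ℕ} (hi : i < n) (hy : y ≤ n) : layeredVal n x y i < n := by
  unfold layeredVal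
  split_ifs <;> omega

theorem layeredVal_injOn {n x y : ℕ} (hy : y ≤ n) : Set.InjOn (layeredVal n x y) (Set.Iio n) := by
  intro i hi j hj h
  simp only [Set.mem_Iio] at hi hj
  unfold layeredVal at h
  split_ifs at h <;> omega

noncomputable def layeredPerm (x y : Fin n) : Equiv.Perm (Fin n) :=
  Equiv.ofBijective (fun i => ⟨layeredVal n x y i, layeredVal_lt i.isLt y.isLt.le⟩) <|
    Finite.injective_iff_bijective.1 fun i j h =>
      Fin.ext (layeredVal_injOn y.isLt.le i.isLt j.isLt (Fin.mk.inj h))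

theorem isLayered_layeredPerm (x y : Fin n) : IsLayered (layeredPerm x y) x y := by
  intro i j hij
  simp only [layeredPerm, Equiv.ofBijective_apply, Fin.le_def, Fin.lt_def]
  rw [Fin.lt_def] at hij
  have := j.isLt
  unfold layeredVal
  split_ifs <;> omega

theorem layeredPerm_ne_revPerm {x y : Fin n} (hxy : x < y) : layeredPerm x y ≠ Fin.revPerm :=
  fun h => (isLayered_layeredPerm x y).not_strictAnti hxy (h ▸ Fin.rev_strictAnti)

theorem layeredPerm_inj {x y x' y' : Fin n} (hxy : x < y) (hxy' : x' < y')
    (h : layeredPerm x y = layeredPerm x' y') : x = x' ∧ y = y' := by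
  have hl := isLayered_layeredPerm x y
  have hl' := isLayered_layeredPerm x' y'
  rw [h] at hl
  obtain ⟨hx, hy⟩ := hl'.le_of_le hxy' hl
  obtain ⟨hx', hy'⟩ := hl.le_of_le hxy hl'
  exact ⟨le_antisymm hx hx', le_antisymm hy hy'⟩

end

theorem stmt1 (n : ℕ) :
    Nat.card {p : Equiv.Perm (Fin n) // Avoids p pat123 ∧ Avoids p pat231} =
      1 + n.choose 2 := by
  let f : Option {q : Fin n × Fin n // q.1 < q.2} → Equiv.Perm (Fin n) :=
    fun o => o.elim Fin.revPerm fun q => layeredPerm q.1.1 q.1.2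
  have hf : Function.Injective f := by
    rintro (_ | ⟨⟨x, y⟩, hxy⟩) (_ | ⟨⟨x', y'⟩, hxy'⟩) h
    · rfl
    · exact (layeredPerm_ne_revPerm hxy' h.symm).elim
    · exact (layeredPerm_ne_revPerm hxy h).elim
    · obtain ⟨rfl, rfl⟩ := layeredPerm_inj hxy hxy' h
      rfl
  have hrange : ∀ p, Avoids p pat123 ∧ Avoids p pat231 ↔ p ∈ Set.range f := by
    intro p
    rw [avoids_pat123_and_pat231_iff]
    constructor
    · rintro (hp | ⟨x, y, hxy, hp⟩)
      · exact ⟨none, (Equiv.Perm.eq_revPerm_of_strictAnti hp).symm⟩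
      · exact ⟨some ⟨(x, y), hxy⟩, (isLayered_layeredPerm x y).eq hp⟩
    · rintro ⟨_ | ⟨⟨x, y⟩, hxy⟩, rfl⟩
      · exact Or.inl Fin.rev_strictAnti
      · exact Or.inr ⟨x, y, hxy, isLayered_layeredPerm x y⟩
  calc Nat.card {p : Equiv.Perm (Fin n) // Avoids p pat123 ∧ Avoids p pat231}
      = Nat.card (Set.range f) := Nat.card_congr (Equiv.subtypeEquivRight hrange)
    _ = Nat.card (Option {q : Fin n × Fin n // q.1 < q.2}) :=
        (Nat.card_congr (Equiv.ofInjective f hf)).symm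
    _ = 1 + n.choose 2 := by
        rw [Finite.card_option, Nat.card_eq_fintype_card, Fintype.card_subtype,
          Fintype.card_product_filter_lt, Fintype.card_fin, add_comm]
end

section
/- For positive integers a, b, c with a+b+c=n, let p(a,b,c) be the permutation of {1,...,n} defined by p_i = n+1-i for 1 ≤ i ≤ a, p_i = a+b+1-i for a+1 ≤ i ≤ a+b, and p_i = n+b+1-i for a+b+1 ≤ i ≤ n. Then p(a,b,c) is a cyclic permutation (a single n-cycle) if and only if p(a,c,b) is a cyclic permutation. -/
/-!
Reading the defining formulas of `p(a,b,c)` backwards shows that `q = p(a,c,b)` is obtained from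
`p⁻¹` by conjugating with the reversal `i ↦ n + 1 - i`. Transitivity of the action, which is what
being an `n`-cycle means, is preserved both by inversion and by conjugation.
-/

theorem isCyclicPerm_inv_iff {n : ℕ} (p : Equiv.Perm (Fin n)) :
    IsCyclicPerm p⁻¹ ↔ IsCyclicPerm p := by
  suffices ∀ p : Equiv.Perm (Fin n), IsCyclicPerm p → IsCyclicPerm p⁻¹ from
    ⟨fun h => inv_inv p ▸ this _ h, this p⟩
  intro p hp x y
  obtain ⟨m, hm⟩ := hp y x
  exact ⟨m, by rw [inv_pow, Equiv.Perm.inv_eq_iff_eq, hm]⟩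

theorem isCyclicPerm_conj_iff {n : ℕ} (σ p : Equiv.Perm (Fin n)) :
    IsCyclicPerm (σ * p * σ⁻¹) ↔ IsCyclicPerm p := by
  suffices ∀ σ p : Equiv.Perm (Fin n), IsCyclicPerm p → IsCyclicPerm (σ * p * σ⁻¹) from
    ⟨fun h => by simpa [mul_assoc] using this σ⁻¹ _ h, this σ p⟩
  intro σ p hp x y
  obtain ⟨m, hm⟩ := hp (σ⁻¹ x) (σ⁻¹ y)
  exact ⟨m, by rw [conj_pow, Equiv.Perm.mul_apply, Equiv.Perm.mul_apply, hm]; simp⟩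

theorem IsTriplePerm.eq_revPerm_conj_inv {n a b c : ℕ} (habc : a + b + c = n)
    {p q : Equiv.Perm (Fin n)} (hp : IsTriplePerm n a b p) (hq : IsTriplePerm n a c q) :
    q = Fin.revPerm * p⁻¹ * Fin.revPerm⁻¹ := by
  ext x
  suffices p (q x).rev = x.rev by
    simp [Equiv.Perm.mul_apply, Fin.revPerm_symm, ← this]
  have hpx := hp (q x).rev
  have hqx := hq x
  have hrev : ((q x).rev : ℕ) = n - 1 - q x := by rw [Fin.val_rev]; omega
  have := x.isLt
  have := (q x).isLt
  apply Fin.ext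
  rw [Fin.val_rev, hpx, hrev]
  split_ifs at hqx ⊢ <;> omega

theorem stmt2_general (n a b c : ℕ)
    (habc : a + b + c = n) (p q : Equiv.Perm (Fin n))
    (hp : IsTriplePerm n a b p) (hq : IsTriplePerm n a c q) :
    IsCyclicPerm p ↔ IsCyclicPerm q := by
  rw [hp.eq_revPerm_conj_inv habc hq, isCyclicPerm_conj_iff, isCyclicPerm_inv_iff]

theorem stmt2 (n a b c : ℕ) (ha : 0 < a) (hb : 0 < b) (hc : 0 < c)
    (habc : a + b + c = n) (p q : Equiv.Perm (Fin n))
    (hp : IsTriplePerm n a b p) (hq : IsTriplePerm n a c q) :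
    IsCyclicPerm p ↔ IsCyclicPerm q :=
  stmt2_general n a b c habc p q hp hq
end

section
/- For positive integers a, b, c with a+b+c=n, let p(a,b,c) be the permutation defined by p_i = n+1-i for 1 ≤ i ≤ a, p_i = a+b+1-i for a+1 ≤ i ≤ a+b, and p_i = n+b+1-i for a+b+1 ≤ i ≤ n. If p(a,b,c) is a cyclic permutation, then a ≤ floor(n/2) and c ≤ floor(n/2). -/
/-!
On the first layer `p` is the reflection `i ↦ n - 1 - i`, which maps the window
`n - a ≤ i < a` (0-based) into itself; if `a > n / 2` this window is nonempty and misses `0`,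
so `p` is not transitive. The last layer acts on `a + b ≤ i < b + c` in the same way.
-/

theorem IsCyclicPerm.mem_of_mapsTo {n : ℕ} {p : Equiv.Perm (Fin n)} (hp : IsCyclicPerm p)
    {S : Set (Fin n)} (hS : Set.MapsTo p S S) {x : Fin n} (hx : x ∈ S) (y : Fin n) : y ∈ S := by
  obtain ⟨m, rfl⟩ := hp x y
  rw [Equiv.Perm.coe_pow]
  exact hS.iterate m hx

namespace IsTriplePerm

variable {n a b : ℕ} {p : Equiv.Perm (Fin n)}

theorem mapsTo_first_window (hp : IsTriplePerm n a b p) :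
    Set.MapsTo p {i | n - a ≤ (i : ℕ) ∧ (i : ℕ) < a} {i | n - a ≤ (i : ℕ) ∧ (i : ℕ) < a} := by
  rintro i ⟨hlo, hhi⟩
  have hpi := hp i
  rw [if_pos hhi] at hpi
  have := i.isLt
  exact ⟨by omega, by omega⟩

theorem mapsTo_last_window {c : ℕ} (habc : a + b + c = n) (hp : IsTriplePerm n a b p) :
    Set.MapsTo p {i | a + b ≤ (i : ℕ) ∧ (i : ℕ) < b + c}
      {i | a + b ≤ (i : ℕ) ∧ (i : ℕ) < b + c} := by
  rintro i ⟨hlo, hhi⟩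
  have hpi := hp i
  rw [if_neg (by omega), if_neg (by omega)] at hpi
  have := i.isLt
  exact ⟨by omega, by omega⟩

end IsTriplePerm

theorem stmt3_general (n a b c : ℕ) (hb : 0 < b)
    (habc : a + b + c = n) (p : Equiv.Perm (Fin n))
    (hp : IsTriplePerm n a b p) (hcyc : IsCyclicPerm p) :
    a ≤ n / 2 ∧ c ≤ n / 2 := by
  constructor
  · by_contra h
    have h0 : n - a ≤ 0 := (hcyc.mem_of_mapsTo hp.mapsTo_first_window
      (x := ⟨n - a, by omega⟩) ⟨le_rfl, by simp only; omega⟩ ⟨0, by omega⟩).1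
    omega
  · by_contra h
    have h0 : a + b ≤ 0 := (hcyc.mem_of_mapsTo (hp.mapsTo_last_window habc)
      (x := ⟨a + b, by omega⟩) ⟨le_rfl, by simp only; omega⟩ ⟨0, by omega⟩).1
    omega

theorem stmt3 (n a b c : ℕ) (ha : 0 < a) (hb : 0 < b) (hc : 0 < c)
    (habc : a + b + c = n) (p : Equiv.Perm (Fin n))
    (hp : IsTriplePerm n a b p) (hcyc : IsCyclicPerm p) :
    a ≤ n / 2 ∧ c ≤ n / 2 :=
  stmt3_general n a b c hb habc p hp hcyc
end

section
/- For positive integers a, b, c with a+b+c=n, let p(a,b,c) be the permutation defined by p_i = n+1-i for 1 ≤ i ≤ a, p_i = a+b+1-i for a+1 ≤ i ≤ a+b, and p_i = n+b+1-i for a+b+1 ≤ i ≤ n. If p(a,b,c) is a cyclic permutation, then gcd(b,c) ≤ 2; moreover, if gcd(b,c) = 2, then a is even. -/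
/-!
Let `d = gcd(b, c)`. Each of the three layers of `p(a,b,c)` reverses a block, so
`p_i + i` is constant on it, and the three constants `n`, `a + b`, `n + b` all agree with `a`
modulo `d`. Hence `i ↦ i mod d` conjugates `p` to the reflection `r ↦ a - 1 - r` of `ZMod d`,
and the orbit of `0` meets only the two residues `0` and `a - 1`. A cyclic `p` has a single
orbit, which meets every residue since `d ≤ n`; so `ZMod d` has at most two elements, and
when `d = 2` the residue `1` must be `a - 1`, i.e. `a` is even.
-/

theorem Equiv.Perm.pow_apply_mem_of_reflect {α R : Type*} [AddCommGroup R] (p : Equiv.Perm α)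
    (φ : α → R) (s : R) (hφ : ∀ x, φ (p x) = s - φ x) (x : α) (m : ℕ) :
    φ ((p ^ m) x) ∈ ({φ x, s - φ x} : Set R) := by
  induction m with
  | zero => simp
  | succ m ih =>
    rw [pow_succ', Equiv.Perm.mul_apply, hφ]
    rcases ih with h | h
    · exact Or.inr (by rw [h]; rfl)
    · exact Or.inl (by rw [Set.mem_singleton_iff.mp h, sub_sub_cancel])

theorem IsCyclicPerm.range_subset_of_reflect {n : ℕ} {R : Type*} [AddCommGroup R]
    {p : Equiv.Perm (Fin n)} (hcyc : IsCyclicPerm p) (φ : Fin n → R) (s : R)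
    (hφ : ∀ x, φ (p x) = s - φ x) (x : Fin n) :
    Set.range φ ⊆ {φ x, s - φ x} := by
  rintro _ ⟨y, rfl⟩
  obtain ⟨m, rfl⟩ := hcyc x y
  exact p.pow_apply_mem_of_reflect φ s hφ x m

theorem IsTriplePerm.natCast_apply {n a b c d : ℕ} {p : Equiv.Perm (Fin n)}
    (hp : IsTriplePerm n a b p) (habc : a + b + c = n) (hb : (b : ZMod d) = 0)
    (hc : (c : ZMod d) = 0) (x : Fin n) :
    ((p x : ℕ) : ZMod d) = a - 1 - (x : ℕ) := by
  have hsum : (p x : ℕ) + x + 1 = n ∨ (p x : ℕ) + x + 1 = a + b ∨ (p x : ℕ) + x + 1 = n + b := by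
    have hpx := hp x
    have := x.isLt
    split_ifs at hpx <;> omega
  have hcast : (((p x : ℕ) + x + 1 : ℕ) : ZMod d) = a := by
    rcases hsum with h | h | h <;> simp [h, ← habc, hb, hc]
  push_cast at hcast
  rw [← hcast]
  ring

theorem ZMod.natCast_fin_surjective {n d : ℕ} [NeZero d] (hd : d ≤ n) :
    Function.Surjective (fun x : Fin n => ((x : ℕ) : ZMod d)) :=
  fun r => ⟨⟨r.val, (ZMod.val_lt r).trans_le hd⟩, ZMod.natCast_zmod_val r⟩

theorem ZMod.le_two_of_subset_pair {d : ℕ} [NeZero d] {u v : ZMod d}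
    (h : Set.univ ⊆ ({u, v} : Set (ZMod d))) : d ≤ 2 := by
  calc d = Fintype.card (ZMod d) := (ZMod.card d).symm
    _ ≤ Finset.card {u, v} := Finset.card_le_card fun r _ => by simpa using h (Set.mem_univ r)
    _ ≤ 2 := Finset.card_le_two

theorem even_of_zmod_two_subset_pair {a : ℕ}
    (h : Set.univ ⊆ ({0, (a : ZMod 2) - 1} : Set (ZMod 2))) : Even a := by
  have h1 : (1 : ZMod 2) = a - 1 := (h (Set.mem_univ 1)).resolve_left one_ne_zero
  rw [← ZMod.natCast_eq_zero_iff_even, sub_eq_iff_eq_add.mp h1.symm]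
  rfl

theorem stmt5_general (n a b c : ℕ) (hb : 0 < b)
    (habc : a + b + c = n) (p : Equiv.Perm (Fin n))
    (hp : IsTriplePerm n a b p) (hcyc : IsCyclicPerm p) :
    Nat.gcd b c ≤ 2 ∧ (Nat.gcd b c = 2 → Even a) := by
  have hdb := Nat.gcd_dvd_left b c
  have hdc := Nat.gcd_dvd_right b c
  have hd0 := Nat.gcd_pos_of_pos_left c hb
  generalize Nat.gcd b c = d at *
  have : NeZero d := ⟨hd0.ne'⟩
  have hdn : d ≤ n := (Nat.le_of_dvd hb hdb).trans (by omega)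
  have hreflect := hp.natCast_apply habc
    ((ZMod.natCast_eq_zero_iff b d).mpr hdb) ((ZMod.natCast_eq_zero_iff c d).mpr hdc)
  have hcover : Set.univ ⊆ ({0, (a : ZMod d) - 1} : Set (ZMod d)) := by
    rw [← (ZMod.natCast_fin_surjective hdn).range_eq]
    simpa using hcyc.range_subset_of_reflect (fun x : Fin n => ((x : ℕ) : ZMod d)) _ hreflect
      ⟨0, by omega⟩
  refine ⟨ZMod.le_two_of_subset_pair hcover, ?_⟩
  rintro rfl
  exact even_of_zmod_two_subset_pair hcover

theorem stmt5 (n a b c : ℕ) (ha : 0 < a) (hb : 0 < b) (hc : 0 < c)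
    (habc : a + b + c = n) (p : Equiv.Perm (Fin n))
    (hp : IsTriplePerm n a b p) (hcyc : IsCyclicPerm p) :
    Nat.gcd b c ≤ 2 ∧ (Nat.gcd b c = 2 → Even a) :=
  stmt5_general n a b c hb habc p hp hcyc
end

section
/- For positive integers a, b, c with a+b+c=n and a=b+c, let p(a,b,c) be the permutation defined by p_i = n+1-i for 1 ≤ i ≤ a, p_i = a+b+1-i for a+1 ≤ i ≤ a+b, and p_i = n+b+1-i for a+b+1 ≤ i ≤ n. If p(a,b,c) is a cyclic permutation, then gcd(b,c) = 1. -/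
/-!
Here `n = 2a`. The permutation `p` maps the lower half `{0, …, a-1}` into the upper half, and `p²`
acts on the lower half as the rotation `x ↦ x + b (mod a)`. So the `p`-orbit of `0` meets the lower
half only at even times, and there it consists of the multiples of `b` mod `a`. If `p` is an
`n`-cycle this orbit contains `1`, so `b` is invertible mod `a`, and `gcd b c = gcd b (b + c) = 1`.
-/

namespace IsTriplePerm

variable {n a b : ℕ} {p : Equiv.Perm (Fin n)}

theorem le_apply_of_lt (hp : IsTriplePerm n a b p) (hn : n = a + a) {x : Fin n}
    (hx : (x : ℕ) < a) : a ≤ (p x : ℕ) := by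
  rw [hp x, if_pos hx]
  omega

theorem apply_apply_of_lt (hp : IsTriplePerm n a b p) (hn : n = a + a) (hba : b ≤ a)
    {x : Fin n} (hx : (x : ℕ) < a) : (p (p x) : ℕ) = ((x : ℕ) + b) % a := by
  have hpx : (p x : ℕ) = n - 1 - x := by rw [hp x, if_pos hx]
  rw [hp (p x), if_neg (by omega)]
  by_cases hwrap : a ≤ (x : ℕ) + b
  · rw [if_pos (by omega), Nat.mod_eq_sub_mod hwrap, Nat.mod_eq_of_lt (by omega)]
    omega
  · rw [if_neg (by omega), Nat.mod_eq_of_lt (by omega)]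
    omega

theorem pow_two_mul_apply_of_lt (hp : IsTriplePerm n a b p) (hn : n = a + a) (hba : b ≤ a)
    (m : ℕ) {x : Fin n} (hx : (x : ℕ) < a) :
    ((p ^ (2 * m)) x : ℕ) = ((x : ℕ) + m * b) % a := by
  induction m generalizing x with
  | zero => simp [Nat.mod_eq_of_lt hx]
  | succ m ih =>
    have hpp := hp.apply_apply_of_lt hn hba hx
    have hpp_lt : (p (p x) : ℕ) < a := hpp ▸ Nat.mod_lt _ (by omega)
    rw [show 2 * (m + 1) = 2 * m + 1 + 1 by ring, pow_succ, pow_succ, Equiv.Perm.mul_apply,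
      Equiv.Perm.mul_apply, ih hpp_lt, hpp, Nat.mod_add_mod]
    congr 1
    ring

theorem exists_mul_modEq_one (hp : IsTriplePerm n a b p) (hn : n = a + a) (hba : b ≤ a)
    (ha : 0 < a) (hcyc : IsCyclicPerm p) : ∃ k, b * k ≡ 1 [MOD a] := by
  have h0 : ((⟨0, by omega⟩ : Fin n) : ℕ) < a := ha
  -- The target is `1 % a` rather than `1` so that it lies in the lower half also when `a = 1`.
  obtain ⟨m, hm⟩ := hcyc ⟨0, by omega⟩ ⟨1 % a, by have := Nat.mod_lt 1 ha; omega⟩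
  obtain ⟨k, rfl | rfl⟩ := Nat.even_or_odd' m
  · refine ⟨k, ?_⟩
    have := hp.pow_two_mul_apply_of_lt hn hba k h0
    rw [hm] at this
    simpa [Nat.ModEq, mul_comm] using this.symm
  · have hupper := hp.le_apply_of_lt hn
      ((hp.pow_two_mul_apply_of_lt hn hba k h0).trans_lt (Nat.mod_lt _ ha))
    rw [← Equiv.Perm.mul_apply, ← pow_succ', hm] at hupper
    have := Nat.mod_lt 1 ha
    rw [Fin.val_mk] at hupper
    omega

end IsTriplePerm

theorem stmt6_general (n a b c : ℕ) (ha : 0 < a)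
    (habc : a + b + c = n) (haeq : a = b + c) (p : Equiv.Perm (Fin n))
    (hp : IsTriplePerm n a b p) (hcyc : IsCyclicPerm p) :
    Nat.gcd b c = 1 := by
  obtain ⟨k, hk⟩ := hp.exists_mul_modEq_one (by omega) (by omega) ha hcyc
  have hcop : Nat.Coprime b a := Nat.coprime_of_mul_modEq_one k hk
  rwa [haeq, Nat.Coprime, Nat.gcd_self_add_right] at hcop

theorem stmt6 (n a b c : ℕ) (ha : 0 < a) (hb : 0 < b) (hc : 0 < c)
    (habc : a + b + c = n) (haeq : a = b + c) (p : Equiv.Perm (Fin n))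
    (hp : IsTriplePerm n a b p) (hcyc : IsCyclicPerm p) :
    Nat.gcd b c = 1 :=
  stmt6_general n a b c ha habc haeq p hp hcyc
end

section
/- Let a = b + c = n/2 with b and c positive integers that are relatively prime. Then the permutation p(a,b,c) of length n defined by p_i = n+1-i for 1 ≤ i ≤ a, p_i = a+b+1-i for a+1 ≤ i ≤ a+b, and p_i = n+b+1-i for a+b+1 ≤ i ≤ n, is a cyclic permutation. -/
/-!
The permutation sends the first half `[0, a)` of `Fin (2a)` into the second half and the second
half into the first, and its square acts on the first half as the rotation `x ↦ x + b mod a`.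
Since `gcd (b, a) = gcd (b, c) = 1` this rotation is a single `a`-cycle, so the first half lies
in one cycle of the permutation, and every point of the second half is mapped into it.
-/

open Equiv Equiv.Perm

theorem Equiv.Perm.sameCycle_of_pow_apply_eq_add_mod {n a b k : ℕ} {p : Perm (Fin n)}
    (hcop : b.Coprime a) (hrot : ∀ x : Fin n, (x : ℕ) < a → ((p ^ k) x : ℕ) = (x + b) % a)
    {x y : Fin n} (hx : (x : ℕ) < a) (hy : (y : ℕ) < a) : p.SameCycle x y := by
  have ha : 0 < a := by omega
  have iterate : ∀ m : ℕ, (((p ^ k) ^ m) x : ℕ) = (x + m * b) % a := by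
    intro m
    induction m with
    | zero => simp [Nat.mod_eq_of_lt hx]
    | succ m ih =>
      rw [pow_succ', mul_apply, hrot _ (ih ▸ Nat.mod_lt _ ha), ih, Nat.mod_add_mod]
      ring_nf
  have : NeZero a := ⟨ha.ne'⟩
  set m := (((y : ℕ) - (x : ℕ) : ZMod a) * (b : ZMod a)⁻¹).val
  have hm : (x + m * b) % a = y := by
    rw [← ZMod.val_natCast, Nat.cast_add, Nat.cast_mul, ZMod.natCast_zmod_val, mul_assoc,
      ZMod.inv_mul_of_unit _ ((ZMod.isUnit_iff_coprime b a).2 hcop), mul_one, add_sub_cancel,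
      ZMod.val_natCast, Nat.mod_eq_of_lt hy]
  have hxy : (p ^ (k * m)) x = y := by
    rw [pow_mul]; exact Fin.ext ((iterate m).trans hm)
  exact hxy ▸ sameCycle_pow_right.2 (SameCycle.refl p x)

theorem isCyclicPerm_of_forall_sameCycle {n : ℕ} {p : Perm (Fin n)}
    (h : ∀ x y, p.SameCycle x y) : IsCyclicPerm p :=
  fun x y => (h x y).exists_nat_pow_eq

theorem exists_isTriplePerm {n a b : ℕ} (hn : n = 2 * a) (hba : b ≤ a) :
    ∃ p : Perm (Fin n), IsTriplePerm n a b p := by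
  let f : Fin n → Fin n := fun i =>
    ⟨if (i : ℕ) < a then n - 1 - i else if (i : ℕ) < a + b then a + b - 1 - i else n + b - 1 - i,
      by split_ifs <;> omega⟩
  have hf : Function.Injective f := by
    intro i j hij
    simp only [f, Fin.mk.injEq] at hij
    split_ifs at hij <;> omega
  exact ⟨Equiv.ofBijective f (Finite.injective_iff_bijective.mp hf), fun _ => rfl⟩

namespace IsTriplePerm

variable {n a b : ℕ} {p : Perm (Fin n)}

theorem sq_apply_of_lt (hp : IsTriplePerm n a b p) (hn : n = 2 * a) (hba : b ≤ a)
    {x : Fin n} (hx : (x : ℕ) < a) : ((p ^ 2) x : ℕ) = (x + b) % a := by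
  rw [pow_two, mul_apply, hp, hp]
  by_cases hxb : (x : ℕ) + b < a
  · rw [Nat.mod_eq_of_lt hxb]
    split_ifs <;> omega
  · rw [Nat.mod_eq_sub_mod (by omega), Nat.mod_eq_of_lt (by omega)]
    split_ifs <;> omega

theorem apply_lt_of_le (hp : IsTriplePerm n a b p) (hn : n = 2 * a) (hba : b ≤ a)
    {x : Fin n} (hx : a ≤ (x : ℕ)) : (p x : ℕ) < a := by
  rw [hp]
  split_ifs <;> omega

theorem isCyclicPerm (hp : IsTriplePerm n a b p) (hn : n = 2 * a) (hba : b ≤ a)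
    (hcop : b.Coprime a) : IsCyclicPerm p := by
  have left : ∀ x y : Fin n, (x : ℕ) < a → (y : ℕ) < a → p.SameCycle x y := fun _ _ =>
    sameCycle_of_pow_apply_eq_add_mod hcop fun _ => hp.sq_apply_of_lt hn hba
  have toLeft : ∀ y : Fin n, ∃ x : Fin n, (x : ℕ) < a ∧ p.SameCycle x y := by
    intro y
    by_cases hy : (y : ℕ) < a
    · exact ⟨y, hy, SameCycle.refl p y⟩
    · exact ⟨p y, hp.apply_lt_of_le hn hba (not_lt.1 hy), sameCycle_apply_left.2 (.refl p y)⟩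
  refine isCyclicPerm_of_forall_sameCycle fun x y => ?_
  obtain ⟨x', hx', hxx'⟩ := toLeft x
  obtain ⟨y', hy', hyy'⟩ := toLeft y
  exact hxx'.symm.trans ((left x' y' hx' hy').trans hyy')

end IsTriplePerm

theorem stmt9_general (n a b c : ℕ)
    (hcop : Nat.gcd b c = 1) (haeq : a = b + c) (habc : a + b + c = n) :
    ∃ p : Equiv.Perm (Fin n), IsTriplePerm n a b p ∧ IsCyclicPerm p := by
  have hn : n = 2 * a := by omega
  have hba : b ≤ a := by omega
  have hcop' : b.Coprime a := by
    rw [haeq, Nat.Coprime, Nat.gcd_self_add_right]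
    exact hcop
  obtain ⟨p, hp⟩ := exists_isTriplePerm hn hba
  exact ⟨p, hp, hp.isCyclicPerm hn hba hcop'⟩

theorem stmt9 (n a b c : ℕ) (hb : 0 < b) (hc : 0 < c)
    (hcop : Nat.gcd b c = 1) (haeq : a = b + c) (habc : a + b + c = n) :
    ∃ p : Equiv.Perm (Fin n), IsTriplePerm n a b p ∧ IsCyclicPerm p :=
  stmt9_general n a b c hcop haeq habc
end

section
/- Let n = 4k for a positive integer k. If a, b, c are positive integers with a+b+c=n such that the permutation p(a,b,c) (defined by p_i = n+1-i for 1 ≤ i ≤ a, p_i = a+b+1-i for a+1 ≤ i ≤ a+b, p_i = n+b+1-i for a+b+1 ≤ i ≤ n) is a cyclic permutation, then a = 2k = n/2. -/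
/-!
Let `n = a + b + c` and write `p` for the three-layer permutation.

If `2a > n`, then `n - a < a`, so `p` swaps `n - a` and `a - 1` and cannot be an `n`-cycle
for `n ≥ 3`.

If `2a < n`, every point of `[0, a)` is sent by `p` into `[b + c, n)` and then back into
`[0, b + c)`, so the first-return map `φ` of `p` on `[0, b + c)` is again a single cycle.
The reversal `h` of `[0, a)` (identity on `[a, b + c)`) is a reversing symmetry of `φ`:
`φ ∘ h ∘ φ = h`. A reversing symmetry of a cycle fixes at most two points of it, at
opposite positions. But `h` fixes `a`, `a + 1` and either the midpoint `(a - 1) / 2` of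
`[0, a)` (for odd `a`) or `a + 2` (for even `a`, where `4 ∣ n` gives `a + 2 < b + c`).
-/

open Function

theorem Nat.two_mul_mod_eq_of_dvd_two_mul {d i : ℕ} (h : d ∣ 2 * i) (h' : ¬ d ∣ i) :
    2 * (i % d) = d := by
  have hmod : i % d ≠ 0 := fun h0 => h' (Nat.dvd_of_mod_eq_zero h0)
  have hlt : i % d < d := Nat.mod_lt i (Nat.pos_of_ne_zero (by rintro rfl; simp_all))
  have hsplit : 2 * i = d * (2 * (i / d)) + 2 * (i % d) := by
    rw [mul_left_comm, ← mul_add, Nat.div_add_mod]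
  refine Nat.eq_of_dvd_of_lt_two_mul (by omega) ?_ (by omega)
  exact (Nat.dvd_add_right (Dvd.intro _ rfl)).mp (hsplit ▸ h)

/-- For an involution `h` this says `h ∘ f ∘ h = f⁻¹`. -/
def IsReversingSymmetry {α : Type*} (h f : α → α) : Prop :=
  ∀ x, f (h (f x)) = h x

namespace IsReversingSymmetry

variable {α : Type*} {h f : α → α}

theorem iterate (hf : IsReversingSymmetry h f) (j : ℕ) : IsReversingSymmetry h f^[j] := by
  induction j with
  | zero => intro x; rfl
  | succ j ih =>
    intro x
    rw [iterate_succ_apply' f j x, iterate_succ_apply, hf, ih]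

theorem isPeriodicPt_two_mul (hf : IsReversingSymmetry h f) {x : α} (hx : IsFixedPt h x)
    {i : ℕ} (hi : IsFixedPt h (f^[i] x)) : IsPeriodicPt f (2 * i) x := by
  have hback := hf.iterate i x
  rw [hi.eq, hx.eq] at hback
  rw [IsPeriodicPt, IsFixedPt, two_mul, iterate_add_apply, hback]

theorem two_mul_mod_minimalPeriod (hf : IsReversingSymmetry h f) {x : α} (hx : IsFixedPt h x)
    {i : ℕ} (hi : IsFixedPt h (f^[i] x)) (hix : f^[i] x ≠ x) :
    2 * (i % minimalPeriod f x) = minimalPeriod f x :=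
  Nat.two_mul_mod_eq_of_dvd_two_mul (hf.isPeriodicPt_two_mul hx hi).minimalPeriod_dvd
    fun hd => hix (isPeriodicPt_iff_minimalPeriod_dvd.mpr hd).eq

theorem eq_of_isFixedPt (hf : IsReversingSymmetry h f) {x y z : α} (hx : IsFixedPt h x)
    (hy : IsFixedPt h y) (hz : IsFixedPt h z) (hyx : y ≠ x) (hzx : z ≠ x)
    (hxy : ∃ i, f^[i] x = y) (hxz : ∃ j, f^[j] x = z) : y = z := by
  obtain ⟨i, rfl⟩ := hxy
  obtain ⟨j, rfl⟩ := hxz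
  have hi := hf.two_mul_mod_minimalPeriod hx hy hyx
  have hj := hf.two_mul_mod_minimalPeriod hx hz hzx
  rw [← iterate_mod_minimalPeriod_eq, ← iterate_mod_minimalPeriod_eq (n := j)]
  congr 1
  omega

end IsReversingSymmetry

theorem exists_iterate_eq_of_firstReturn {α : Type*} {g r : α → α} {s : Set α}
    (hin : ∀ x ∈ s, g x ∈ s → r x = g x) (hout : ∀ x ∈ s, g x ∉ s → r x = g (g x))
    (hr : ∀ x ∈ s, r x ∈ s) (t : ℕ) :
    ∀ x ∈ s, g^[t] x ∈ s → ∃ j, r^[j] x = g^[t] x := by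
  induction t using Nat.strong_induction_on with
  | _ t ih =>
  intro x hx hxt
  match t with
  | 0 => exact ⟨0, rfl⟩
  | t + 1 =>
    by_cases hgx : g x ∈ s
    · obtain ⟨j, hj⟩ := ih t (by omega) (g x) hgx hxt
      exact ⟨j + 1, by rw [iterate_succ_apply, hin x hx hgx, hj]; rfl⟩
    · match t with
      | 0 => exact absurd hxt hgx
      | t + 1 =>
        have hrx := hout x hx hgx
        obtain ⟨j, hj⟩ := ih t (by omega) (r x) (hr x hx) (by rw [hrx]; exact hxt)
        exact ⟨j + 1, by rw [iterate_succ_apply, hj, hrx]; rfl⟩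

theorem le_two_of_isPeriodicPt_two {g : ℕ → ℕ} {n x : ℕ} (hreach : ∀ y < n, ∃ t, g^[t] x = y)
    (hx : IsPeriodicPt g 2 x) : n ≤ 2 := by
  have horbit : ∀ y < n, y = x ∨ y = g x := fun y hy => by
    obtain ⟨t, rfl⟩ := hreach y hy
    rw [← hx.iterate_mod_apply]
    rcases Nat.mod_two_eq_zero_or_one t with h | h <;> rw [h] <;> simp
  by_contra! h3
  have := horbit 0 (by omega)
  have := horbit 1 (by omega)
  have := horbit 2 (by omega)
  omega

def tripleMap (n a b i : ℕ) : ℕ :=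
  if i < a then n - 1 - i
  else if i < a + b then a + b - 1 - i
  else n + b - 1 - i

section TriplePerm

variable {n a b c : ℕ} {p : Equiv.Perm (Fin n)}

theorem IsTriplePerm.coe_pow_apply (hp : IsTriplePerm n a b p) (t : ℕ) (x : Fin n) :
    ((p ^ t) x : ℕ) = (tripleMap n a b)^[t] x := by
  induction t with
  | zero => rfl
  | succ t ih => rw [pow_succ', Equiv.Perm.mul_apply, hp, iterate_succ_apply', ← ih]; rfl

theorem IsTriplePerm.exists_iterate_eq (hp : IsTriplePerm n a b p) (hcyc : IsCyclicPerm p)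
    {x y : ℕ} (hx : x < n) (hy : y < n) : ∃ t, (tripleMap n a b)^[t] x = y := by
  obtain ⟨t, ht⟩ := hcyc ⟨x, hx⟩ ⟨y, hy⟩
  exact ⟨t, by simpa only [hp.coe_pow_apply] using congrArg Fin.val ht⟩

theorem IsTriplePerm.two_mul_le (hp : IsTriplePerm n a b p) (hcyc : IsCyclicPerm p)
    (hn : 3 ≤ n) (han : a ≤ n) : 2 * a ≤ n := by
  by_contra! h
  have hto : tripleMap n a b (n - a) = a - 1 := by unfold tripleMap; split_ifs <;> omega
  have hfro : tripleMap n a b (a - 1) = n - a := by unfold tripleMap; split_ifs <;> omega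
  have hswap : IsPeriodicPt (tripleMap n a b) 2 (n - a) := by
    show tripleMap n a b (tripleMap n a b (n - a)) = n - a
    rw [hto, hfro]
  have := le_two_of_isPeriodicPt_two (fun y hy => hp.exists_iterate_eq hcyc (by omega) hy) hswap
  omega

/-- The first-return map of `tripleMap (a + b + c) a b` on `[0, b + c)` (when `a < b + c`),
extended by the identity. -/
def returnMap (a b c v : ℕ) : ℕ :=
  if v < a then (if v < c then v + b else v - c)
  else if b + c ≤ v then v
  else if v < a + b then a + b - 1 - v
  else a + 2 * b + c - 1 - v

def reflectBelow (a v : ℕ) : ℕ := if v < a then a - 1 - v else v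

theorem isReversingSymmetry_reflectBelow_returnMap (hlt : a < b + c) :
    IsReversingSymmetry (reflectBelow a) (returnMap a b c) := by
  intro v
  unfold returnMap reflectBelow
  split_ifs <;> omega

theorem IsTriplePerm.exists_returnMap_iterate_eq (hp : IsTriplePerm n a b p)
    (hcyc : IsCyclicPerm p) (habc : a + b + c = n) (hlt : a < b + c) {z : ℕ} (hz : z < b + c) :
    ∃ j, (returnMap a b c)^[j] a = z := by
  obtain ⟨t, ht⟩ := hp.exists_iterate_eq hcyc (x := a) (by omega) (by omega : z < n)
  subst habc ht
  refine exists_iterate_eq_of_firstReturn (s := Set.Iio (b + c)) ?_ ?_ ?_ t a hlt hz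
  all_goals
    intro v (hv : v < b + c)
    simp only [Set.mem_Iio, returnMap, tripleMap]
    split_ifs <;> omega

theorem IsTriplePerm.le_two_mul (hp : IsTriplePerm n a b p) (hcyc : IsCyclicPerm p)
    (habc : a + b + c = n) (hn : 4 ∣ n) : n ≤ 2 * a := by
  by_contra! h
  have hlt : a < b + c := by omega
  have hfix : ∀ v, a ≤ v → IsFixedPt (reflectBelow a) v := fun v hv => if_neg (by omega)
  have hreach {z} (hz : z < b + c) := hp.exists_returnMap_iterate_eq hcyc habc hlt hz
  have hsymm := isReversingSymmetry_reflectBelow_returnMap hlt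
  have hy : a + 1 < b + c := by omega
  rcases Nat.even_or_odd a with ⟨m, rfl⟩ | ⟨m, rfl⟩
  · have hz : m + m + 2 < b + c := by omega
    have := hsymm.eq_of_isFixedPt (hfix _ le_rfl) (hfix _ (by omega)) (hfix _ (by omega))
      (by omega) (by omega) (hreach hy) (hreach hz)
    omega
  · have hmid : IsFixedPt (reflectBelow (2 * m + 1)) m := by
      simp only [IsFixedPt, reflectBelow]
      split_ifs <;> omega
    have := hsymm.eq_of_isFixedPt (hfix _ le_rfl) (hfix _ (by omega)) hmid
      (by omega) (by omega) (hreach hy) (hreach (by omega : m < b + c))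
    omega

end TriplePerm

theorem stmt12_general (n k a b c : ℕ) (hk : 0 < k) (hn : n = 4 * k)
    (habc : a + b + c = n)
    (p : Equiv.Perm (Fin n)) (hp : IsTriplePerm n a b p) (hcyc : IsCyclicPerm p) :
    a = 2 * k ∧ a = n / 2 := by
  have hupper := hp.two_mul_le hcyc (by omega) (by omega)
  have hlower := hp.le_two_mul hcyc habc (by omega)
  omega

theorem stmt12 (n k a b c : ℕ) (hk : 0 < k) (hn : n = 4 * k)
    (ha : 0 < a) (hb : 0 < b) (hc : 0 < c) (habc : a + b + c = n)
    (p : Equiv.Perm (Fin n)) (hp : IsTriplePerm n a b p) (hcyc : IsCyclicPerm p) :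
    a = 2 * k ∧ a = n / 2 :=
  stmt12_general n k a b c hk hn habc p hp hcyc
end

section
/- Let n = 4k + 2 > 2 and a = 2k. If b, c are positive integers with a+b+c = n such that the permutation p(a,b,c) (defined by p_i = n+1-i for 1 ≤ i ≤ a, p_i = a+b+1-i for a+1 ≤ i ≤ a+b, p_i = n+b+1-i for a+b+1 ≤ i ≤ n) is a cyclic permutation, then b and c are both even. -/
/-!
An `n`-cycle has sign `-(-1)^n`, which is `-1` for `n = 4k + 2`. On the other hand, reversing the
values of `p(a,b,c)` leaves the identity on the first `a` positions and the rotation by `c` on the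
last `b + c`, which exchanges blocks of lengths `b` and `c`; hence
`sign p = (-1)^(n choose 2) * (-1)^(b c)`. As `(4k + 2) choose 2` is odd, `b c` is even, and since
`b + c = 2k + 2` is even too, both `b` and `c` are even.
-/

open Equiv Finset

theorem Fin.sign_revPerm (n : ℕ) : Perm.sign (Fin.revPerm : Perm (Fin n)) = (-1) ^ n.choose 2 := by
  have hcol (j : Fin n) :
      ∏ i ∈ Iio j, (if Fin.revPerm i < Fin.revPerm j then 1 else -1 : ℤˣ) = (-1) ^ (j : ℕ) := by
    rw [prod_congr rfl fun i hi => if_neg (by simpa using (mem_Iio.mp hi).le), Finset.prod_const,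
      Fin.card_Iio]
  rw [Perm.sign_eq_prod_prod_Iio]
  simp only [hcol, prod_pow_eq_pow_sum, Fin.sum_univ_eq_sum_range (fun j => j), sum_range_id,
    Nat.choose_two_right]

theorem Fin.val_finRotate_pow_apply {m : ℕ} (t : ℕ) (j : Fin m) :
    ((finRotate m ^ t) j : ℕ) = (j + t) % m := by
  induction t with
  | zero => simp [Nat.mod_eq_of_lt j.isLt]
  | succ t ih =>
    have := j.neZero
    rw [pow_succ', Perm.mul_apply, finRotate_apply, Fin.val_add, ih, Fin.val_one', ← Nat.add_mod,
      add_assoc]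

theorem sign_finRotate_pow (b c : ℕ) :
    Perm.sign (finRotate (b + c) ^ c) = (-1) ^ (b * c) := by
  have hexp : (b + c - 1) * c = b * c + c * (c - 1) := by
    cases c with
    | zero => simp
    | succ c => simp only [Nat.add_sub_cancel, ← add_assoc]; ring
  rw [map_pow, sign_finRotate, ← pow_mul, hexp, pow_add, (Nat.even_mul_pred_self c).neg_one_pow,
    mul_one]

theorem IsCyclicPerm.apply_ne {n : ℕ} {p : Perm (Fin n)} (h : IsCyclicPerm p) (hn : 2 ≤ n)
    (x : Fin n) : p x ≠ x := by
  have : Nontrivial (Fin n) := Fin.nontrivial_iff_two_le.mpr hn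
  obtain ⟨y, hy⟩ := exists_ne x
  intro hx
  obtain ⟨m, hm⟩ := h x y
  exact hy (by rw [← hm, Perm.pow_apply_eq_self_of_apply_eq_self hx])

theorem IsCyclicPerm.sign_eq {n : ℕ} {p : Perm (Fin n)} (h : IsCyclicPerm p) (hn : 2 ≤ n) :
    Perm.sign p = -(-1) ^ n := by
  have hcycle : p.IsCycle := by
    refine ⟨⟨0, by omega⟩, h.apply_ne hn _, fun y _ => ?_⟩
    obtain ⟨m, hm⟩ := h ⟨0, by omega⟩ y
    exact ⟨m, by rwa [zpow_natCast]⟩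
  have hsupp : p.support = univ :=
    eq_univ_of_forall fun x => Perm.mem_support.mpr (h.apply_ne hn x)
  rw [hcycle.sign, hsupp, card_univ, Fintype.card_fin]

namespace IsTriplePerm

variable {a b c : ℕ} {p : Perm (Fin (a + b + c))}

theorem val_revPerm_mul_apply (hp : IsTriplePerm (a + b + c) a b p) (i : Fin (a + b + c)) :
    (((Fin.revPerm : Perm (Fin (a + b + c))) * p) i : ℕ) =
      if (i : ℕ) < a then (i : ℕ) else a + (i - a + c) % (b + c) := by
  have hpi := hp i
  have hpi_lt := (p i).isLt
  rw [Perm.mul_apply, Fin.revPerm_apply, Fin.val_rev]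
  split_ifs at hpi ⊢ with hia hiab
  · omega
  · rw [Nat.mod_eq_of_lt (by omega)]
    omega
  · rw [Nat.mod_eq_sub_mod (by omega), Nat.mod_eq_of_lt (by omega)]
    omega

theorem sign_revPerm_mul (hp : IsTriplePerm (a + b + c) a b p) :
    Perm.sign ((Fin.revPerm : Perm (Fin (a + b + c))) * p) = (-1) ^ (b * c) :=
  calc Perm.sign ((Fin.revPerm : Perm (Fin (a + b + c))) * p)
      = Perm.sign (Perm.sumCongr (1 : Perm (Fin a)) (finRotate (b + c) ^ c)) := by
        refine (Perm.sign_eq_sign_of_equiv _ _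
          (finSumFinEquiv.trans (finCongr (add_assoc a b c).symm)) fun x => Fin.ext ?_).symm
        rw [hp.val_revPerm_mul_apply]
        rcases x with i | j
        · simp [i.isLt]
        · simp [Fin.val_finRotate_pow_apply]
    _ = (-1) ^ (b * c) := by
        rw [Perm.sign_sumCongr, Perm.sign_one, one_mul, sign_finRotate_pow]

theorem sign_eq (hp : IsTriplePerm (a + b + c) a b p) :
    Perm.sign p = (-1) ^ (a + b + c).choose 2 * (-1) ^ (b * c) := by
  rw [← inv_mul_cancel_left (Fin.revPerm : Perm (Fin (a + b + c))) p, Perm.sign_mul,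
    Perm.sign_inv, Fin.sign_revPerm, hp.sign_revPerm_mul]

end IsTriplePerm

theorem odd_choose_two_four_mul_add_two (k : ℕ) : Odd ((4 * k + 2).choose 2) := by
  have hchoose : (4 * k + 2).choose 2 = (2 * k + 1) * (4 * k + 1) := by
    rw [Nat.choose_two_right]
    exact Nat.div_eq_of_eq_mul_left two_pos (by rw [show 4 * k + 2 - 1 = 4 * k + 1 by omega]; ring)
  rw [hchoose]
  exact Nat.odd_mul.mpr ⟨⟨k, rfl⟩, ⟨2 * k, by ring⟩⟩

theorem stmt13_general (n k a b c : ℕ) (hn : n = 4 * k + 2) (ha : a = 2 * k)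
    (habc : a + b + c = n)
    (p : Equiv.Perm (Fin n)) (hp : IsTriplePerm n a b p) (hcyc : IsCyclicPerm p) :
    Even b ∧ Even c := by
  subst habc
  have hsign := hcyc.sign_eq (by omega)
  rw [hp.sign_eq, hn, (odd_choose_two_four_mul_add_two k).neg_one_pow,
    (show Even (4 * k + 2) from ⟨2 * k + 1, by ring⟩).neg_one_pow, neg_one_mul, neg_inj] at hsign
  have hbc : Even (b * c) := (neg_one_pow_eq_one_iff_even (by decide)).mp hsign
  have hsum : Even (b + c) := ⟨k + 1, by omega⟩
  rcases Nat.even_mul.mp hbc with hb | hc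
  · exact ⟨hb, (Nat.even_add.mp hsum).mp hb⟩
  · exact ⟨(Nat.even_add.mp hsum).mpr hc, hc⟩

theorem stmt13 (n k a b c : ℕ) (hn : n = 4 * k + 2) (hn2 : 2 < n) (ha : a = 2 * k)
    (hb : 0 < b) (hc : 0 < c) (habc : a + b + c = n)
    (p : Equiv.Perm (Fin n)) (hp : IsTriplePerm n a b p) (hcyc : IsCyclicPerm p) :
    Even b ∧ Even c :=
  stmt13_general n k a b c hn ha habc p hp hcyc
end

section
/- For all n ≥ 3, the number of cyclic permutations of length n avoiding both patterns 123 and 132 equals 2^{floor((n-1)/2)}. -/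
namespace CyclicAvoiders

open Finset

variable {n : ℕ}

def NoTwoLargerAfter (p : Equiv.Perm (Fin n)) : Prop :=
  ∀ i j k : Fin n, i < j → j < k → p i < p j → p i < p k → False

lemma strictMono_vec3 {i j k : Fin n} (hij : i < j) (hjk : j < k) : StrictMono ![i, j, k] := by
  refine Fin.strictMono_iff_lt_succ.2 fun a => ?_
  fin_cases a
  exacts [hij, hjk]

lemma contains_pat123 (p : Equiv.Perm (Fin n)) {i j k : Fin n} (hij : i < j) (hjk : j < k)
    (h₁ : p i < p j) (h₂ : p j < p k) : Contains p pat123 := by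
  refine ⟨![i, j, k], strictMono_vec3 hij hjk, ?_⟩
  have h₃ := h₁.trans h₂
  simp [Fin.forall_fin_succ, pat123, h₁, h₂, h₃, h₁.le, h₃.le, h₂.not_gt]

lemma contains_pat132 (p : Equiv.Perm (Fin n)) {i j k : Fin n} (hij : i < j) (hjk : j < k)
    (h₁ : p i < p k) (h₂ : p k < p j) : Contains p pat132 := by
  refine ⟨![i, j, k], strictMono_vec3 hij hjk, ?_⟩
  have h₃ := h₁.trans h₂
  simp [Fin.forall_fin_succ, pat132, h₁, h₂, h₃, h₁.le, h₃.le, h₂.not_gt]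

theorem avoids_pat123_and_pat132_iff (p : Equiv.Perm (Fin n)) :
    Avoids p pat123 ∧ Avoids p pat132 ↔ NoTwoLargerAfter p := by
  constructor
  · rintro ⟨h123, h132⟩ i j k hij hjk hj hk
    rcases (p.injective.ne hjk.ne).lt_or_gt with hjk' | hjk'
    · exact h123 (contains_pat123 p hij hjk hj hjk')
    · exact h132 (contains_pat132 p hij hjk hk hjk')
  · have key : ∀ q : Fin 3 → Fin 3, q 0 < q 1 → q 0 < q 2 → NoTwoLargerAfter p → Avoids p q :=
      fun q h01 h02 hp ⟨f, hf, hq⟩ =>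
        hp _ _ _ (hf (by decide : (0 : Fin 3) < 1)) (hf (by decide : (1 : Fin 3) < 2))
          ((hq 0 1).1 h01) ((hq 0 2).1 h02)
    exact fun hp => ⟨key _ (by decide) (by decide) hp, key _ (by decide) (by decide) hp⟩

lemma card_lt_apply (p : Equiv.Perm (Fin n)) (i : Fin n) :
    #{j | p i < p j} = n - 1 - p i := by
  rw [card_equiv p (t := {v | p i < v}) (by simp), filter_lt_eq_Ioi, Fin.card_Ioi]

lemma card_le_apply (p : Equiv.Perm (Fin n)) (m : ℕ) : #{j | m ≤ (p j : ℕ)} = n - m := by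
  have h := card_filter_add_card_filter_not (s := (univ : Finset (Fin n))) (fun v => (v : ℕ) < m)
  rw [card_equiv p (t := ({v | m ≤ (v : ℕ)} : Finset (Fin n))) (by simp)]
  simp only [card_univ, Fintype.card_fin, Fin.card_filter_val_lt, not_lt] at h
  omega

lemma add_two_le_apply_add {p : Equiv.Perm (Fin n)} (hp : NoTwoLargerAfter p) (i : Fin n) :
    n ≤ p i + i + 2 := by
  have hafter : #{j | i < j ∧ p i < p j} ≤ 1 := by
    refine card_le_one.2 fun a ha b hb => ?_
    simp only [mem_filter, mem_univ, true_and] at ha hb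
    by_contra hab
    rcases lt_or_gt_of_ne hab with h | h
    · exact hp i a b ha.1 h ha.2 hb.2
    · exact hp i b a hb.1 h hb.2 ha.2
  have hsplit : ({j | p i < p j} : Finset (Fin n)) ⊆
      ({j | i < j ∧ p i < p j} : Finset (Fin n)) ∪ Iio i := by
    intro j hj
    simp only [mem_filter, mem_univ, true_and, mem_union, mem_Iio] at hj ⊢
    rcases lt_trichotomy i j with h | rfl | h
    · exact .inl ⟨h, hj⟩
    · exact absurd hj (lt_irrefl _)
    · exact .inr h
  have := (card_le_card hsplit).trans (card_union_le _ _)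
  rw [card_lt_apply, Fin.card_Iio] at this
  omega

lemma val_lt_of_le_apply {p : Equiv.Perm (Fin n)} {s : ℕ} (hs : s ≤ n)
    (h : ∀ t : Fin n, (t : ℕ) < s → n - s ≤ p t) {t : Fin n} (ht : n - s ≤ p t) : (t : ℕ) < s := by
  have hsub : ({t | (t : ℕ) < s} : Finset (Fin n)) ⊆
      ({t | n - s ≤ (p t : ℕ)} : Finset (Fin n)) := by
    intro t; simpa using h t
  have heq := eq_of_subset_of_card_le hsub (by rw [card_le_apply, Fin.card_filter_val_lt]; omega)
  have hmem : t ∈ ({t | n - s ≤ (p t : ℕ)} : Finset (Fin n)) := by simpa using ht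
  rw [← heq] at hmem
  simpa using hmem

/-- The first position of the maximal run of `true`s of `c` that ends just before `i`. -/
def runStart (c : ℕ → Bool) : ℕ → ℕ
  | 0 => 0
  | i + 1 => if c i then runStart c i else i + 1

section runStart

variable (c : ℕ → Bool)

lemma runStart_succ (i : ℕ) : runStart c (i + 1) = if c i then runStart c i else i + 1 := rfl

lemma runStart_le (i : ℕ) : runStart c i ≤ i := by
  induction i with
  | zero => rfl
  | succ i ih => unfold runStart; split <;> omega

lemma eq_true_of_runStart_le {i j : ℕ} (hij : runStart c j ≤ i) (hj : i < j) : c i = true := by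
  induction j with
  | zero => omega
  | succ j ih =>
    unfold runStart at hij
    by_cases hcj : c j
    · rw [if_pos hcj] at hij
      rcases Nat.lt_succ_iff_lt_or_eq.1 hj with h | rfl
      exacts [ih hij h, hcj]
    · rw [if_neg hcj] at hij
      omega

lemma eq_false_of_runStart_eq_succ {i s : ℕ} (h : runStart c i = s + 1) : c s = false := by
  induction i with
  | zero => simp [runStart] at h
  | succ i ih =>
    unfold runStart at h
    split at h
    · exact ih h
    · simp_all

lemma runStart_eq_zero {i : ℕ} (h : ∀ t < i, c t = true) : runStart c i = 0 := by
  induction i with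
  | zero => rfl
  | succ i ih =>
    rw [runStart, if_pos (h i i.lt_succ_self)]
    exact ih fun t ht => h t (ht.trans i.lt_succ_self)

end runStart

abbrev Code (n : ℕ) := {c : ℕ → Bool // ∀ i, n - 1 ≤ i → c i = false}

/-- The value at position `i` of the permutation with code `c`: `c i = true` means that
positions `i` and `i + 1` lie in the same block, and each block, read left to right, takes the
largest values not used before it in the order `top - 1, top - 2, …, bottom, top`. -/
def codeVal (n : ℕ) (c : ℕ → Bool) (i : ℕ) : ℕ :=
  if c i then n - 2 - i else n - 1 - runStart c i

section codeVal

variable {c : ℕ → Bool} {i : ℕ}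

lemma codeVal_of_true (h : c i = true) : codeVal n c i = n - 2 - i := by
  rw [codeVal, if_pos h]

lemma codeVal_of_false (h : c i = false) : codeVal n c i = n - 1 - runStart c i := by
  rw [codeVal, if_neg (by simp [h])]

lemma codeVal_lt (hi : i < n) : codeVal n c i < n := by
  unfold codeVal; split <;> omega

lemma sub_two_sub_le_codeVal : n - 2 - i ≤ codeVal n c i := by
  have := runStart_le c i
  unfold codeVal; split <;> omega

lemma lt_sub_one_of_code (c : Code n) (h : c.1 i = true) : i < n - 1 := by
  by_contra hi
  simp [c.2 i (by omega)] at h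

lemma eq_of_codeVal_eq (c : Code n) {j : ℕ} (hi : i < n) (hj : j < n)
    (h : codeVal n c.1 i = codeVal n c.1 j) : i = j := by
  by_contra hne
  wlog hij : i < j generalizing i j
  · exact this hj hi h.symm (Ne.symm hne) (by omega)
  have := runStart_le c.1 i
  have := runStart_le c.1 j
  cases hci : c.1 i <;> cases hcj : c.1 j <;>
    simp only [codeVal_of_true, codeVal_of_false, hci, hcj] at h
  · simp [eq_true_of_runStart_le c.1 (by omega) hij] at hci
  · have := lt_sub_one_of_code c hcj; omega
  · have := lt_sub_one_of_code c hci
    simp [eq_false_of_runStart_eq_succ c.1 (show runStart c.1 j = i + 1 by omega)] at hci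
  · have := lt_sub_one_of_code c hci
    have := lt_sub_one_of_code c hcj
    omega

end codeVal

noncomputable def codePerm (c : Code n) : Equiv.Perm (Fin n) :=
  Equiv.ofBijective (fun i => ⟨codeVal n c.1 i, codeVal_lt i.isLt⟩) <|
    Finite.injective_iff_bijective.1 fun i j h =>
      Fin.ext (eq_of_codeVal_eq c i.isLt j.isLt (congrArg Fin.val h))

lemma codePerm_apply (c : Code n) (i : Fin n) : (codePerm c i : ℕ) = codeVal n c.1 i := rfl

def permCode (p : Equiv.Perm (Fin n)) : Code n :=
  ⟨fun i => if h : i + 1 < n then decide ((p ⟨i, by omega⟩ : ℕ) + i + 2 = n) else false,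
    fun i hi => dif_neg (by omega)⟩

lemma permCode_apply (p : Equiv.Perm (Fin n)) (i : Fin n) :
    (permCode p).1 i = decide ((p i : ℕ) + i + 2 = n) := by
  by_cases h : (i : ℕ) + 1 < n
  · simp [permCode, h]
  · have := (p i).isLt
    simp [permCode, h]
    omega

lemma permCode_codePerm (c : Code n) : permCode (codePerm c) = c := by
  ext i
  by_cases hi : i < n
  · rw [permCode_apply _ ⟨i, hi⟩, codePerm_apply]
    have := runStart_le c.1 i
    cases hci : c.1 i
    · simp only [codeVal_of_false hci, decide_eq_false_iff_not]; omega
    · have := lt_sub_one_of_code c hci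
      simp only [codeVal_of_true hci, decide_eq_true_eq]; omega
  · rw [(permCode _).2 i (by omega), c.2 i (by omega)]

lemma eq_false_and_runStart_le_of_codeVal_lt {c : ℕ → Bool} {i t : ℕ} (hit : i < t) (ht : t < n)
    (h : codeVal n c i < codeVal n c t) : c t = false ∧ runStart c t ≤ i := by
  have := @sub_two_sub_le_codeVal n c i
  have := runStart_le c t
  cases hct : c t
  · exact ⟨rfl, by rw [codeVal_of_false hct] at h; omega⟩
  · rw [codeVal_of_true hct] at h; omega

theorem noTwoLargerAfter_codePerm (c : Code n) : NoTwoLargerAfter (codePerm c) := by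
  intro i j k hij hjk hj hk
  simp only [Fin.lt_def, codePerm_apply] at hij hjk hj hk
  have hcj := (eq_false_and_runStart_le_of_codeVal_lt hij j.isLt hj).1
  have hrk := (eq_false_and_runStart_le_of_codeVal_lt (hij.trans hjk) k.isLt hk).2
  simp [eq_true_of_runStart_le c.1 (hrk.trans hij.le) hjk] at hcj

lemma sub_runStart_le_codeVal {c : ℕ → Bool} {i t : ℕ} (ht : t < runStart c i) :
    n - runStart c i ≤ codeVal n c t := by
  rcases Nat.lt_or_ge (t + 1) (runStart c i) with h | h
  · exact le_trans (by omega) sub_two_sub_le_codeVal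
  · have hs : runStart c i = t + 1 := by omega
    have := runStart_le c t
    rw [codeVal_of_false (eq_false_of_runStart_eq_succ c hs)]
    omega

theorem apply_eq_codeVal {p : Equiv.Perm (Fin n)} (hp : NoTwoLargerAfter p) (i : Fin n) :
    (p i : ℕ) = codeVal n (permCode p).1 i := by
  set c := (permCode p).1
  obtain ⟨i, hi⟩ := i
  induction i using Nat.strong_induction_on with
  | _ i ih =>
  replace ih : ∀ t < i, ∀ ht : t < n, (p ⟨t, ht⟩ : ℕ) = codeVal n c t := ih
  show (p ⟨i, hi⟩ : ℕ) = codeVal n c i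
  have hlow : n ≤ (p ⟨i, hi⟩ : ℕ) + i + 2 := add_two_le_apply_add hp ⟨i, hi⟩
  have hci : c i = decide ((p ⟨i, hi⟩ : ℕ) + i + 2 = n) := permCode_apply p ⟨i, hi⟩
  cases hc : c i
  · rw [hc, eq_comm, decide_eq_false_iff_not] at hci
    rw [codeVal_of_false hc]
    have hs := runStart_le c i
    have hbefore : ∀ t : Fin n, (t : ℕ) < runStart c i → n - runStart c i ≤ p t := fun t ht => by
      rw [ih t (by omega)]
      exact sub_runStart_le_codeVal ht
    have htop : (p ⟨i, hi⟩ : ℕ) < n - runStart c i := by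
      by_contra h
      have := val_lt_of_le_apply (by omega) hbefore (not_lt.1 h)
      simp only at this
      omega
    -- the values between `n - 1 - i` and `n - 2 - runStart c i` are taken by the current run
    by_contra hval
    set t := n - 2 - p ⟨i, hi⟩
    have hpt : (p ⟨t, by omega⟩ : ℕ) = p ⟨i, hi⟩ := by
      rw [ih t (by omega),
        codeVal_of_true (eq_true_of_runStart_le c (j := i) (by omega) (by omega))]
      omega
    have := congrArg Fin.val (p.injective (Fin.ext hpt))
    simp only at this
    omega
  · rw [hc, eq_comm, decide_eq_true_eq] at hci
    rw [codeVal_of_true hc]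
    omega

theorem codePerm_permCode {p : Equiv.Perm (Fin n)} (hp : NoTwoLargerAfter p) :
    codePerm (permCode p) = p :=
  Equiv.ext fun i => Fin.ext ((apply_eq_codeVal hp i).symm)

noncomputable def codeEquiv : Code n ≃ {p : Equiv.Perm (Fin n) // NoTwoLargerAfter p} where
  toFun c := ⟨codePerm c, noTwoLargerAfter_codePerm c⟩
  invFun p := permCode p.1
  left_inv := permCode_codePerm
  right_inv p := Subtype.ext (codePerm_permCode p.2)

section SameCycle

open Equiv Perm

variable {α β : Type*} {p : Perm α} {q : Perm β}

theorem isCyclicPerm_iff_sameCycle {p : Perm (Fin n)} :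
    IsCyclicPerm p ↔ ∀ x y, p.SameCycle x y :=
  ⟨fun h x y => let ⟨m, hm⟩ := h x y; ⟨m, by rwa [zpow_natCast]⟩,
    fun h x y => (h x y).exists_nat_pow_eq⟩

lemma sameCycle_map_of_step [Finite α] {f : α → β} (hf : ∀ a, f (p a) = f a ∨ f (p a) = q (f a))
    {a b : α} (h : p.SameCycle a b) : q.SameCycle (f a) (f b) := by
  obtain ⟨m, rfl⟩ := h.exists_nat_pow_eq
  clear h
  induction m with
  | zero => exact .rfl
  | succ m ih =>
    rw [pow_succ', mul_apply]
    rcases hf ((p ^ m) a) with h | h <;> rw [h]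
    exacts [ih, sameCycle_apply_right.2 ih]

lemma sameCycle_comp_of_step [Finite β] {s : β → α} (hs : ∀ x, p.SameCycle (s x) (s (q x)))
    {x y : β} (h : q.SameCycle x y) : p.SameCycle (s x) (s y) := by
  obtain ⟨m, rfl⟩ := h.exists_nat_pow_eq
  clear h
  induction m with
  | zero => exact .rfl
  | succ m ih =>
    rw [pow_succ', mul_apply]
    exact ih.trans (hs _)

structure IsDetour (p : Perm α) (q : Perm β) (s : β → α) (w : β) (α₁ α₂ : α) : Prop where
  injective : Function.Injective s
  mem_range_iff : ∀ a, (∃ x, s x = a) ↔ a ≠ α₁ ∧ a ≠ α₂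
  apply_of_ne : ∀ x, x ≠ w → p (s x) = s (q x)
  apply_w : p (s w) = α₁
  apply_α₁ : p α₁ = α₂
  apply_α₂ : p α₂ = s (q w)

namespace IsDetour

variable {s : β → α} {w : β} {α₁ α₂ : α}

lemma eq_or_eq_of_not_exists (h : IsDetour p q s w α₁ α₂) {a : α} (ha : ¬ ∃ x, s x = a) :
    a = α₁ ∨ a = α₂ := by
  have := mt (h.mem_range_iff a).2 ha
  tauto

lemma forall_sameCycle_contract [Finite α] (h : IsDetour p q s w α₁ α₂)
    (hp : ∀ a b, p.SameCycle a b) (x y : β) : q.SameCycle x y := by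
  classical
  let π : α → β := fun a => if h : ∃ x, s x = a then h.choose else w
  have hπs : ∀ x, π (s x) = x := fun x => by
    have h' : ∃ x', s x' = s x := ⟨x, rfl⟩
    simp only [π, dif_pos h']
    exact h.injective h'.choose_spec
  have hπα₁ : π α₁ = w := dif_neg fun ⟨x, hx⟩ => ((h.mem_range_iff _).1 ⟨x, hx⟩).1 rfl
  have hπα₂ : π α₂ = w := dif_neg fun ⟨x, hx⟩ => ((h.mem_range_iff _).1 ⟨x, hx⟩).2 rfl
  have hstep : ∀ a, π (p a) = π a ∨ π (p a) = q (π a) := by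
    intro a
    by_cases ha : ∃ x, s x = a
    · obtain ⟨x, rfl⟩ := ha
      by_cases hx : x = w
      · subst hx
        left; rw [h.apply_w, hπα₁, hπs]
      · right; rw [h.apply_of_ne x hx, hπs, hπs]
    · rcases h.eq_or_eq_of_not_exists ha with rfl | rfl
      · left; rw [h.apply_α₁, hπα₁, hπα₂]
      · right; rw [h.apply_α₂, hπs, hπα₂]
  simpa only [hπs] using sameCycle_map_of_step hstep (hp (s x) (s y))

lemma forall_sameCycle_expand [Finite β] (h : IsDetour p q s w α₁ α₂)
    (hq : ∀ x y, q.SameCycle x y) (a b : α) : p.SameCycle a b := by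
  have hstep : ∀ x, p.SameCycle (s x) (s (q x)) := by
    intro x
    by_cases hx : x = w
    · subst hx
      rw [← h.apply_α₂, ← h.apply_α₁, ← h.apply_w]
      exact ⟨3, by simp [zpow_ofNat, pow_succ]⟩
    · rw [← h.apply_of_ne x hx]
      exact ⟨1, by simp⟩
  have hreach : ∀ a, p.SameCycle (s w) a := by
    intro a
    by_cases ha : ∃ x, s x = a
    · obtain ⟨x, rfl⟩ := ha
      exact sameCycle_comp_of_step hstep (hq w x)
    · rcases h.eq_or_eq_of_not_exists ha with rfl | rfl
      · exact ⟨1, by simp [h.apply_w]⟩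
      · exact ⟨2, by simp [pow_succ, h.apply_w, h.apply_α₁]⟩
  exact (hreach a).symm.trans (hreach b)

theorem forall_sameCycle_iff [Finite α] [Finite β] (h : IsDetour p q s w α₁ α₂) :
    (∀ a b, p.SameCycle a b) ↔ ∀ x y, q.SameCycle x y :=
  ⟨h.forall_sameCycle_contract, h.forall_sameCycle_expand⟩

end IsDetour

end SameCycle

lemma isCyclicPerm_iff_of_splice_ends {m : ℕ} {p : Equiv.Perm (Fin (m + 2))}
    {q : Equiv.Perm (Fin m)} {w : Fin m} {a₁ a₂ : Fin (m + 2)}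
    (ha : (a₁ : ℕ) = 0 ∧ (a₂ : ℕ) = m + 1 ∨ (a₁ : ℕ) = m + 1 ∧ (a₂ : ℕ) = 0)
    (hmid : ∀ x : Fin m, x ≠ w → (p x.succ.castSucc : ℕ) = q x + 1)
    (h₁ : p w.succ.castSucc = a₁) (h₂ : p a₁ = a₂) (h₃ : (p a₂ : ℕ) = q w + 1) :
    IsCyclicPerm p ↔ IsCyclicPerm q := by
  have hval : ∀ x : Fin m, ((x.succ.castSucc : Fin (m + 2)) : ℕ) = x + 1 := fun x => rfl
  rw [isCyclicPerm_iff_sameCycle, isCyclicPerm_iff_sameCycle]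
  refine IsDetour.forall_sameCycle_iff (s := fun x : Fin m => x.succ.castSucc) (w := w)
    ⟨Fin.castSucc_injective _ |>.comp (Fin.succ_injective _), fun a => ?_,
      fun x hx => Fin.ext (by rw [hmid x hx, hval]), h₁, h₂, Fin.ext (by rw [h₃, hval])⟩
  constructor
  · rintro ⟨x, rfl⟩
    simp only [ne_eq, Fin.ext_iff, hval]
    omega
  · intro h
    simp only [ne_eq, Fin.ext_iff] at h
    exact ⟨⟨a - 1, by omega⟩, Fin.ext (show (a : ℕ) - 1 + 1 = a by omega)⟩

lemma not_isCyclicPerm_of_swap {p : Equiv.Perm (Fin n)} {a b y : Fin n} (hab : p a = b)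
    (hba : p b = a) (hya : y ≠ a) (hyb : y ≠ b) : ¬ IsCyclicPerm p := by
  intro h
  obtain ⟨m, hm⟩ := h a y
  have horbit : ∀ m, (p ^ m) a = a ∨ (p ^ m) a = b := by
    intro m
    induction m with
    | zero => exact .inl rfl
    | succ m ih =>
      rw [pow_succ', Equiv.Perm.mul_apply]
      rcases ih with h | h <;> rw [h]
      exacts [.inr hab, .inl hba]
  rcases horbit m with h | h <;> rw [hm] at h
  exacts [hya h, hyb h]

def IsSkewPalindrome (n : ℕ) (c : ℕ → Bool) : Prop :=
  (∀ i j, i + j + 2 = n → i ≠ j → c j = !c i) ∧ ∀ i, 2 * i + 2 = n → c i = false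

variable {m : ℕ}

def Code.inner (c : Code (m + 2)) : Code m :=
  ⟨fun i => if i + 1 < m then c.1 (i + 1) else false, fun _ _ => if_neg (by omega)⟩

lemma isSkewPalindrome_inner_iff (c : Code (m + 2)) (hb : c.1 m = !c.1 0) :
    IsSkewPalindrome (m + 2) c.1 ↔ IsSkewPalindrome m c.inner.1 := by
  have hin : ∀ i, i + 1 < m → c.inner.1 i = c.1 (i + 1) := fun i hi => if_pos hi
  constructor
  · rintro ⟨hpair, hmid⟩
    refine ⟨fun i j hij hne => ?_, fun i hi => ?_⟩
    · rw [hin i (by omega), hin j (by omega)]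
      exact hpair (i + 1) (j + 1) (by omega) (by omega)
    · rw [hin i (by omega)]
      exact hmid (i + 1) (by omega)
  · rintro ⟨hpair, hmid⟩
    refine ⟨fun i j hij hne => ?_, fun i hi => ?_⟩
    · rcases Nat.eq_zero_or_pos i with rfl | hi
      · obtain rfl : j = m := by omega
        exact hb
      rcases Nat.eq_zero_or_pos j with rfl | hj
      · obtain rfl : i = m := by omega
        simp [hb]
      have := hpair (i - 1) (j - 1) (by omega) (by omega)
      rwa [hin _ (by omega), hin _ (by omega), Nat.sub_add_cancel hi,
        Nat.sub_add_cancel hj] at this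
    · rcases Nat.eq_zero_or_pos i with rfl | hi'
      · obtain rfl : m = 0 := by omega
        simp at hb
      have := hmid (i - 1) (by omega)
      rwa [hin _ (by omega), Nat.sub_add_cancel hi'] at this

lemma runStart_succ_of_shift {c c' : ℕ → Bool} {x : ℕ} (h : ∀ t < x, c' t = c (t + 1)) :
    runStart c (x + 1) = if c 0 ∧ runStart c' x = 0 then 0 else runStart c' x + 1 := by
  induction x with
  | zero => simp [runStart]
  | succ x ih =>
    rw [runStart_succ c (x + 1), runStart_succ c' x, ← h x x.lt_succ_self,
      ih fun t ht => h t (ht.trans x.lt_succ_self)]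
    cases c' x <;> simp

lemma codeVal_succ_of_shift {c : ℕ → Bool} {c' : Code m} {x : ℕ} (hx : x < m)
    (hxc : c'.1 x = c (x + 1)) (hrun : c'.1 x = false → runStart c (x + 1) = runStart c'.1 x + 1) :
    codeVal (m + 2) c (x + 1) = codeVal m c'.1 x + 1 := by
  have := runStart_le c'.1 x
  cases hc : c'.1 x
  · rw [codeVal_of_false (hxc ▸ hc), codeVal_of_false hc, hrun hc]
    omega
  · have := lt_sub_one_of_code c' hc
    rw [codeVal_of_true (hxc ▸ hc), codeVal_of_true hc]
    omega

lemma codePerm_succ_castSucc (c : Code (m + 2)) (x : Fin m) :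
    (codePerm c x.succ.castSucc : ℕ) = codeVal (m + 2) c.1 (x + 1) := rfl

lemma isCyclicPerm_codePerm_iff_inner_of_head_false (c : Code (m + 2)) (hm : 0 < m)
    (h0 : c.1 0 = false) (hlast : c.1 m = true) :
    IsCyclicPerm (codePerm c) ↔ IsCyclicPerm (codePerm c.inner) := by
  have hin : ∀ t, t + 1 < m → c.inner.1 t = c.1 (t + 1) := fun t ht => if_pos ht
  have hrun : ∀ x, x < m → runStart c.1 (x + 1) = runStart c.inner.1 x + 1 := fun x hx => by
    rw [runStart_succ_of_shift (x := x) fun t ht => hin t (by omega)]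
    simp [h0]
  have hw : c.inner.1 (m - 1) = false := c.inner.2 _ le_rfl
  refine isCyclicPerm_iff_of_splice_ends (w := ⟨m - 1, by omega⟩) (a₁ := 0)
    (a₂ := Fin.last _) (by simp) (fun x hx => ?_) (Fin.ext ?_) (Fin.ext ?_) ?_
  · have hx : (x : ℕ) + 1 < m := by
      have : (x : ℕ) ≠ m - 1 := fun h => hx (Fin.ext h)
      omega
    rw [codePerm_succ_castSucc, codePerm_apply]
    exact codeVal_succ_of_shift x.isLt (hin x hx) fun _ => hrun x x.isLt
  · rw [codePerm_succ_castSucc]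
    simp only [Nat.sub_add_cancel hm, codeVal_of_true hlast, Fin.val_zero]
    omega
  · simp [codePerm_apply, codeVal_of_false h0, runStart]
  · have := runStart_le c.inner.1 (m - 1)
    have hrun' := hrun (m - 1) (by omega)
    rw [Nat.sub_add_cancel hm] at hrun'
    rw [codePerm_apply, codePerm_apply, Fin.val_last, codeVal_of_false (c.2 _ (by omega)),
      runStart_succ, if_pos hlast, hrun', codeVal_of_false hw]
    omega

lemma isCyclicPerm_codePerm_iff_inner_of_head_true (c : Code (m + 2)) (hm : 0 < m)
    (h0 : c.1 0 = true) (hlast : c.1 m = false) :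
    IsCyclicPerm (codePerm c) ↔ IsCyclicPerm (codePerm c.inner) := by
  have hin : ∀ t < m, c.inner.1 t = c.1 (t + 1) := fun t ht => by
    by_cases h : t + 1 < m
    · exact if_pos h
    · obtain rfl : t = m - 1 := by omega
      rw [c.inner.2 _ le_rfl, Nat.sub_add_cancel hm, hlast]
  -- the excursion happens at the first `false` of the inner code
  have hex : ∃ t, c.inner.1 t = false := ⟨m - 1, c.inner.2 _ le_rfl⟩
  have hw : Nat.find hex < m := (Nat.find_min' hex (c.inner.2 _ le_rfl)).trans_lt (by omega)
  have hrun : ∀ x < m, runStart c.1 (x + 1) =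
      if runStart c.inner.1 x = 0 then 0 else runStart c.inner.1 x + 1 := fun x hx => by
    rw [runStart_succ_of_shift fun t ht => hin t (by omega)]
    simp [h0]
  have hrun_w : runStart c.inner.1 (Nat.find hex) = 0 :=
    runStart_eq_zero _ fun t ht => by simpa using Nat.find_min hex ht
  refine isCyclicPerm_iff_of_splice_ends (w := ⟨Nat.find hex, hw⟩) (a₁ := Fin.last _) (a₂ := 0)
    (by simp) (fun x hx => ?_) (Fin.ext ?_) (Fin.ext ?_) ?_
  · rw [codePerm_succ_castSucc, codePerm_apply]
    refine codeVal_succ_of_shift x.isLt (hin x x.isLt) fun hcx => ?_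
    rw [hrun x x.isLt, if_neg]
    intro h0x
    refine hx (Fin.ext (le_antisymm ?_ (Nat.find_min' hex hcx)))
    by_contra hlt
    simpa [Nat.find_spec hex] using
      eq_true_of_runStart_le c.inner.1 (i := Nat.find hex) (by omega) (not_le.1 hlt)
  · rw [codePerm_succ_castSucc, codeVal_of_false ((hin _ hw) ▸ Nat.find_spec hex),
      hrun _ hw, if_pos hrun_w]
    simp
  · simp [codePerm_apply, codeVal_of_false (c.2 (m + 1) (by omega)), runStart_succ, hlast]
  · simp only [codePerm_apply, Fin.val_zero, codeVal_of_true h0, codeVal_of_false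
      (Nat.find_spec hex), hrun_w]
    omega

theorem isCyclicPerm_codePerm_iff_inner (c : Code (m + 2)) (hm : 0 < m) (hb : c.1 m = !c.1 0) :
    IsCyclicPerm (codePerm c) ↔ IsCyclicPerm (codePerm c.inner) := by
  cases h0 : c.1 0
  · exact isCyclicPerm_codePerm_iff_inner_of_head_false c hm h0 (by simpa [h0] using hb)
  · exact isCyclicPerm_codePerm_iff_inner_of_head_true c hm h0 (by simpa [h0] using hb)

lemma not_isCyclicPerm_codePerm_of_head_true (c : Code (m + 2)) (h0 : c.1 0 = true)
    (hlast : c.1 m = true) : ¬ IsCyclicPerm (codePerm c) :=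
  not_isCyclicPerm_of_swap (a := 0) (b := ⟨m, by omega⟩) (y := Fin.last _)
    (Fin.ext (by simp [codePerm_apply, codeVal_of_true h0]))
    (Fin.ext (by simp [codePerm_apply, codeVal_of_true hlast]))
    (by simp [Fin.ext_iff]) (by simp [Fin.ext_iff])

lemma not_isCyclicPerm_codePerm_of_head_false (c : Code (m + 2)) (hm : 0 < m)
    (h0 : c.1 0 = false) (hlast : c.1 m = false) : ¬ IsCyclicPerm (codePerm c) :=
  not_isCyclicPerm_of_swap (a := 0) (b := Fin.last _) (y := ⟨1, by omega⟩)
    (Fin.ext (by simp [codePerm_apply, codeVal_of_false h0, runStart]))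
    (Fin.ext (by simp [codePerm_apply, codeVal_of_false (c.2 (m + 1) (by omega)),
      runStart_succ, hlast]))
    (by simp) (by simp [Fin.ext_iff]; omega)

lemma not_isCyclicPerm_codePerm_of_head_eq (c : Code (m + 2)) (hm : 0 < m)
    (hb : c.1 m = c.1 0) : ¬ IsCyclicPerm (codePerm c) := by
  cases h0 : c.1 0
  · exact not_isCyclicPerm_codePerm_of_head_false c hm h0 (hb.trans h0)
  · exact not_isCyclicPerm_codePerm_of_head_true c h0 (hb.trans h0)

lemma isCyclicPerm_of_apply_zero {p : Equiv.Perm (Fin 2)} (h : p 0 = 1) : IsCyclicPerm p := by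
  have h1 : p 1 = 0 := by
    rcases Fin.exists_fin_two.1 ⟨p 1, rfl⟩ with h' | h'
    · exact h'
    · exact absurd (p.injective (h'.trans h.symm)) (by decide)
  intro x y
  fin_cases x <;> fin_cases y
  exacts [⟨0, rfl⟩, ⟨1, h⟩, ⟨1, h1⟩, ⟨0, rfl⟩]

theorem isCyclicPerm_codePerm_iff : ∀ {n : ℕ} (c : Code n),
    IsCyclicPerm (codePerm c) ↔ IsSkewPalindrome n c.1
  | 0, _ | 1, _ => iff_of_true (fun _ _ => ⟨0, Subsingleton.elim _ _⟩)
      ⟨fun _ _ _ => by omega, fun _ _ => by omega⟩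
  | 2, c => by
    have hskew : IsSkewPalindrome 2 c.1 ↔ c.1 0 = false :=
      ⟨fun h => h.2 0 rfl, fun h => ⟨fun i j _ _ => by omega, fun i hi => by
        obtain rfl : i = 0 := by omega
        exact h⟩⟩
    rw [hskew]
    cases h0 : c.1 0
    · exact iff_of_true (isCyclicPerm_of_apply_zero (Fin.ext (by
        simp [codePerm_apply, codeVal_of_false h0, runStart]))) rfl
    · exact iff_of_false (not_isCyclicPerm_codePerm_of_head_true c h0 h0) (by simp)
  | m + 3, c => by
    by_cases hb : c.1 (m + 1) = !c.1 0
    · rw [isCyclicPerm_codePerm_iff_inner c (by omega) hb, isCyclicPerm_codePerm_iff c.inner,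
        isSkewPalindrome_inner_iff c hb]
    · refine iff_of_false (not_isCyclicPerm_codePerm_of_head_eq c (by omega) ?_)
        fun h => hb (h.1 0 (m + 1) (by omega) (by omega))
      revert hb
      cases c.1 (m + 1) <;> cases c.1 0 <;> simp

def skewExtend (n : ℕ) (b : Fin ((n - 1) / 2) → Bool) (i : ℕ) : Bool :=
  if h : i < (n - 1) / 2 then b ⟨i, h⟩
  else if h' : i + 1 < n ∧ 2 * i + 2 ≠ n then !b ⟨n - 2 - i, by omega⟩
  else false

lemma skewExtend_of_lt (b : Fin ((n - 1) / 2) → Bool) {i : ℕ} (h : i < (n - 1) / 2) :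
    skewExtend n b i = b ⟨i, h⟩ := dif_pos h

lemma skewExtend_of_le (b : Fin ((n - 1) / 2) → Bool) {i : ℕ} (h : (n - 1) / 2 ≤ i)
    (hi : i + 1 < n) (hmid : 2 * i + 2 ≠ n) : skewExtend n b i = !b ⟨n - 2 - i, by omega⟩ := by
  rw [skewExtend, dif_neg (by omega), dif_pos ⟨hi, hmid⟩]

lemma isSkewPalindrome_skewExtend (b : Fin ((n - 1) / 2) → Bool) :
    IsSkewPalindrome n (skewExtend n b) := by
  refine ⟨fun i j hij hne => ?_, fun i hi => ?_⟩
  · rcases Nat.lt_or_ge i ((n - 1) / 2) with hi | hi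
    · rw [skewExtend_of_lt b hi, skewExtend_of_le b (by omega) (by omega) (by omega)]
      congr 2; ext; simp only; omega
    · rw [skewExtend_of_le b hi (by omega) (by omega),
        skewExtend_of_lt b (show j < (n - 1) / 2 by omega), Bool.not_not]
      congr 1; ext; simp only; omega
  · rw [skewExtend, dif_neg (by omega), dif_neg (by omega)]

noncomputable def skewPalindromeEquiv (n : ℕ) :
    {c : Code n // IsSkewPalindrome n c.1} ≃ (Fin ((n - 1) / 2) → Bool) where
  toFun c i := c.1.1 i
  invFun b := ⟨⟨skewExtend n b, fun i hi => by rw [skewExtend, dif_neg (by omega),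
    dif_neg (by omega)]⟩, isSkewPalindrome_skewExtend b⟩
  left_inv := by
    rintro ⟨c, hpair, hmid⟩
    refine Subtype.ext (Subtype.ext (funext fun i => ?_))
    simp only
    rcases Nat.lt_or_ge i ((n - 1) / 2) with hi | hi
    · exact skewExtend_of_lt _ hi
    by_cases hin : i + 1 < n ∧ 2 * i + 2 ≠ n
    · rw [skewExtend_of_le _ hi hin.1 hin.2, hpair (n - 2 - i) i (by omega) (by omega)]
    · rw [skewExtend, dif_neg (by omega), dif_neg hin]
      rcases not_and_or.1 hin with h | h
      · exact (c.2 i (by omega)).symm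
      · exact (hmid i (not_not.1 h)).symm
  right_inv b := funext fun i => skewExtend_of_lt b i.isLt

theorem card_skewPalindrome (n : ℕ) :
    Nat.card {c : Code n // IsSkewPalindrome n c.1} = 2 ^ ((n - 1) / 2) := by
  rw [Nat.card_congr (skewPalindromeEquiv n), Nat.card_eq_fintype_card, Fintype.card_fun,
    Fintype.card_bool, Fintype.card_fin]

end CyclicAvoiders

theorem stmt16_general (n : ℕ) :
    Nat.card {p : Equiv.Perm (Fin n) //
        IsCyclicPerm p ∧ Avoids p pat123 ∧ Avoids p pat132} = 2 ^ ((n - 1) / 2) := by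
  open CyclicAvoiders in
  calc Nat.card {p : Equiv.Perm (Fin n) // IsCyclicPerm p ∧ Avoids p pat123 ∧ Avoids p pat132}
      = Nat.card {p : {p : Equiv.Perm (Fin n) // NoTwoLargerAfter p} // IsCyclicPerm p.1} := by
        rw [Nat.card_congr (Equiv.subtypeSubtypeEquivSubtypeInter _ _)]
        simp only [avoids_pat123_and_pat132_iff, and_comm]
    _ = Nat.card {c : Code n // IsSkewPalindrome n c.1} :=
        Nat.card_congr
          (Equiv.subtypeEquiv codeEquiv fun c => (isCyclicPerm_codePerm_iff c).symm).symm
    _ = 2 ^ ((n - 1) / 2) := card_skewPalindrome n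

theorem stmt16 (n : ℕ) (hn : 3 ≤ n) :
    Nat.card {p : Equiv.Perm (Fin n) //
        IsCyclicPerm p ∧ Avoids p pat123 ∧ Avoids p pat132} = 2 ^ ((n - 1) / 2) :=
  stmt16_general n
end

section
/- Let q = q_1...q_k be an involution pattern of length k > 2 such that the position i of the maximal entry k in q satisfies i ≤ k - 2. Then for all n ≥ 2, 2·C_n(q) ≤ C_{n+1}(q), where C_n(q) denotes the number of cyclic permutations of length n avoiding q. -/
/-!
Inserting a new maximum value just before the last entry of a cyclic permutation amounts, in
cycle notation, to inserting the new point right after the second-to-last point, so the result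
is again cyclic. It still avoids `q`: an occurrence through the new maximum would have to map
the maximum of `q` there, and that needs two more positions to its right. Conjugating this
insertion by inversion, which preserves cyclicity and, for an involution `q`, avoidance of `q`,
gives a second injection, and the images of the two are disjoint because a cyclic permutation
of at least two points has no fixed point.
-/

open Equiv Equiv.Perm

variable {n k : ℕ}

theorem Contains.inv {p : Perm (Fin n)} {q : Perm (Fin k)} (h : Contains p q) :
    Contains p⁻¹ ⇑q⁻¹ := by
  obtain ⟨f, hf, hiff⟩ := h
  refine ⟨fun j => p (f (q⁻¹ j)), fun i j hij => ?_, fun i j => ?_⟩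
  · simpa using (hiff (q⁻¹ i) (q⁻¹ j)).mp (by simpa using hij)
  · simpa using hf.lt_iff_lt.symm

theorem Avoids.inv {p : Perm (Fin n)} {q : Perm (Fin k)} (hq : q * q = 1) (h : Avoids p q) :
    Avoids p⁻¹ q := fun hc => h (by simpa [inv_eq_of_mul_eq_one_right hq] using hc.inv)

theorem val_eq_sub_one_of_apply_eq_last {τ : Perm (Fin (n + 1))} {q : Perm (Fin k)}
    {f : Fin k → Fin (n + 1)} (hiff : ∀ i j, q i < q j ↔ τ (f i) < τ (f j)) {i₀ : Fin k}
    (h : τ (f i₀) = Fin.last n) : (q i₀ : ℕ) = k - 1 := by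
  have hk := i₀.isLt
  obtain ⟨j, hj⟩ := q.surjective ⟨k - 1, by omega⟩
  have hle : ¬ q i₀ < q j := by
    rw [hiff, h]
    exact not_lt_of_ge (Fin.le_last _)
  have hqj : (q j : ℕ) = k - 1 := by rw [hj]
  rw [Fin.lt_def] at hle
  have := (q i₀).isLt
  omega

/-- In one-line notation, `p` with the new maximum value `n` inserted at position `a`. -/
def insertMax (a : Fin (n + 1)) (p : Perm (Fin n)) : Perm (Fin (n + 1)) :=
  (finSuccEquiv' a).trans ((optionCongr p).trans (finSuccEquiv' (Fin.last n)).symm)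

section insertMax

variable (a : Fin (n + 1)) (p : Perm (Fin n))

@[simp] theorem insertMax_apply_self : insertMax a p a = Fin.last n := by
  simp [insertMax]

@[simp] theorem insertMax_apply_succAbove (x : Fin n) :
    insertMax a p (a.succAbove x) = (p x).castSucc := by
  simp [insertMax]

theorem insertMax_injective : Function.Injective (insertMax (n := n) a) := fun p p' h =>
  Equiv.ext fun x => Fin.castSucc_injective _ <| by
    rw [← insertMax_apply_succAbove, ← insertMax_apply_succAbove, h]

end insertMax

theorem insertMax_castSucc_last_apply_last (p : Perm (Fin (n + 1))) :
    insertMax (Fin.last n).castSucc p (Fin.last (n + 1)) = (p (Fin.last n)).castSucc := by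
  rw [← Fin.succ_last, ← Fin.succAbove_castSucc_self, insertMax_apply_succAbove]

theorem insertMax_castSucc_last_apply_castSucc (p : Perm (Fin (n + 1))) {x : Fin (n + 1)}
    (hx : x ≠ Fin.last n) : insertMax (Fin.last n).castSucc p x.castSucc = (p x).castSucc := by
  rw [← Fin.succAbove_of_castSucc_lt _ _ (Fin.castSucc_lt_castSucc_iff.2
    (Fin.lt_last_iff_ne_last.2 hx)), insertMax_apply_succAbove]

theorem contains_of_insertMax {a : Fin (n + 1)} {p : Perm (Fin n)} {q : Perm (Fin k)}
    {f : Fin k → Fin (n + 1)} (hf : StrictMono f)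
    (hiff : ∀ i j, q i < q j ↔ insertMax a p (f i) < insertMax a p (f j))
    (ha : ∀ i, f i ≠ a) : Contains p q := by
  choose g hg using fun i => Fin.exists_succAbove_eq (ha i)
  refine ⟨g, fun i j hij => ?_, fun i j => ?_⟩
  · rw [← (Fin.strictMono_succAbove a).lt_iff_lt, hg, hg]
    exact hf hij
  · rw [hiff, ← hg, ← hg, insertMax_apply_succAbove, insertMax_apply_succAbove,
      Fin.castSucc_lt_castSucc_iff]

theorem Avoids.insertMax {a : Fin (n + 1)} {p : Perm (Fin n)} {q : Perm (Fin k)}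
    (ha : n ≤ a + 1) (hmax : ∀ i : Fin k, (q i : ℕ) = k - 1 → (i : ℕ) + 3 ≤ k)
    (h : Avoids p q) : Avoids (insertMax a p) q := by
  rintro ⟨f, hf, hiff⟩
  refine h (contains_of_insertMax hf hiff fun i hi => ?_)
  have hi3 := hmax i (val_eq_sub_one_of_apply_eq_last hiff (by rw [hi, insertMax_apply_self]))
  -- the two positions to the right of the maximum of `q` do not fit to the right of `a`
  have h1 : f i < f ⟨i + 1, by omega⟩ := hf (by simp [Fin.lt_def])
  have h2 : f ⟨i + 1, by omega⟩ < f ⟨i + 2, by omega⟩ := hf (by simp [Fin.lt_def])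
  have h3 := (f ⟨i + 2, by omega⟩).isLt
  rw [hi] at h1
  simp only [Fin.lt_def] at h1 h2
  omega

theorem isCyclicPerm_iff_sameCycle {p : Perm (Fin n)} :
    IsCyclicPerm p ↔ ∀ x y, p.SameCycle x y :=
  ⟨fun h x y => let ⟨m, hm⟩ := h x y; ⟨m, by simpa using hm⟩,
    fun h x y => (h x y).exists_nat_pow_eq⟩

namespace IsCyclicPerm

variable {p : Perm (Fin n)}

theorem inv (h : IsCyclicPerm p) : IsCyclicPerm p⁻¹ :=
  isCyclicPerm_iff_sameCycle.2 fun x y => sameCycle_inv.2 (isCyclicPerm_iff_sameCycle.1 h x y)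

theorem apply_ne_self (h : IsCyclicPerm p) (hn : 2 ≤ n) (x : Fin n) : p x ≠ x := by
  intro hx
  have := Fin.nontrivial_iff_two_le.2 hn
  obtain ⟨y, hy⟩ := exists_ne x
  exact hy ((isCyclicPerm_iff_sameCycle.1 h x y).eq_of_left hx).symm

end IsCyclicPerm

/-- In cycle notation the new point `n + 1` is inserted right after `n`. -/
theorem IsCyclicPerm.insertMax_castSucc_last {p : Perm (Fin (n + 1))} (hp : IsCyclicPerm p) :
    IsCyclicPerm (insertMax (Fin.last n).castSucc p) := by
  set τ := insertMax (Fin.last n).castSucc p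
  have hτ : τ (Fin.last n).castSucc = Fin.last (n + 1) := insertMax_apply_self _ _
  have step (x : Fin (n + 1)) : τ.SameCycle x.castSucc (p x).castSucc := by
    by_cases hx : x = Fin.last n
    · subst hx
      rw [← insertMax_castSucc_last_apply_last, ← hτ, sameCycle_apply_right,
        sameCycle_apply_right]
    · rw [← insertMax_castSucc_last_apply_castSucc p hx, sameCycle_apply_right]
  have lift (m : ℕ) (x : Fin (n + 1)) : τ.SameCycle x.castSucc ((p ^ m) x).castSucc := by
    induction m with
    | zero => rfl
    | succ m ih => exact ih.trans (by rw [pow_succ', Perm.mul_apply]; exact step _)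
  have toLast (u : Fin (n + 2)) : τ.SameCycle u (Fin.last n).castSucc := by
    cases u using Fin.lastCases with
    | last => rw [← hτ]; exact (sameCycle_apply_right.2 (SameCycle.refl _ _)).symm
    | cast x => obtain ⟨m, hm⟩ := hp x (Fin.last n); exact hm ▸ lift m x
  exact isCyclicPerm_iff_sameCycle.2 fun x y => (toLast x).trans (toLast y).symm

theorem insertMax_castSucc_last_ne_inv {σ τ : Perm (Fin (n + 1))}
    (hτ : τ (Fin.last n) ≠ Fin.last n) :
    insertMax (Fin.last n).castSucc σ ≠ (insertMax (Fin.last n).castSucc τ)⁻¹ := by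
  intro h
  have := Perm.eq_inv_iff_eq.1 (Perm.ext_iff.1 h (Fin.last n).castSucc)
  rw [insertMax_apply_self, insertMax_castSucc_last_apply_last, Fin.castSucc_inj] at this
  exact hτ this

theorem stmt19_general (k : ℕ) (q : Equiv.Perm (Fin k))
    (hinv : q * q = 1)
    (hmax : ∀ i : Fin k, (q i : ℕ) = k - 1 → (i : ℕ) + 3 ≤ k)
    (n : ℕ) (hn : 2 ≤ n) :
    2 * Nat.card {p : Equiv.Perm (Fin n) // IsCyclicPerm p ∧ Avoids p ⇑q} ≤
      Nat.card {p : Equiv.Perm (Fin (n + 1)) // IsCyclicPerm p ∧ Avoids p ⇑q} := by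
  obtain ⟨m, rfl⟩ : ∃ m, n = m + 1 + 1 := ⟨n - 2, by omega⟩
  have ha : m + 1 + 1 ≤ (Fin.last (m + 1)).castSucc + 1 := by simp
  let Φ : {p : Perm (Fin (m + 1 + 1)) // IsCyclicPerm p ∧ Avoids p q} ⊕
      {p : Perm (Fin (m + 1 + 1)) // IsCyclicPerm p ∧ Avoids p q} →
      {p : Perm (Fin (m + 1 + 1 + 1)) // IsCyclicPerm p ∧ Avoids p q} :=
    Sum.elim
      (fun p => ⟨insertMax (Fin.last (m + 1)).castSucc p, p.2.1.insertMax_castSucc_last,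
        p.2.2.insertMax ha hmax⟩)
      (fun p => ⟨(insertMax (Fin.last (m + 1)).castSucc p⁻¹)⁻¹,
        p.2.1.inv.insertMax_castSucc_last.inv, ((p.2.2.inv hinv).insertMax ha hmax).inv hinv⟩)
  have hΦ : Function.Injective Φ := by
    rintro (σ | σ) (τ | τ) h <;> simp only [Φ, Sum.elim_inl, Sum.elim_inr, Subtype.mk.injEq] at h
    · exact congrArg _ (Subtype.ext (insertMax_injective _ h))
    · exact absurd h (insertMax_castSucc_last_ne_inv (τ.2.1.inv.apply_ne_self (by omega) _))
    · exact absurd h.symm (insertMax_castSucc_last_ne_inv (σ.2.1.inv.apply_ne_self (by omega) _))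
    · exact congrArg _ (Subtype.ext (inv_injective (insertMax_injective _ (inv_injective h))))
  simpa [two_mul] using Nat.card_le_card_of_injective Φ hΦ

theorem stmt19 (k : ℕ) (hk : 2 < k) (q : Equiv.Perm (Fin k))
    (hinv : q * q = 1)
    (hmax : ∀ i : Fin k, (q i : ℕ) = k - 1 → (i : ℕ) + 3 ≤ k)
    (n : ℕ) (hn : 2 ≤ n) :
    2 * Nat.card {p : Equiv.Perm (Fin n) // IsCyclicPerm p ∧ Avoids p ⇑q} ≤
      Nat.card {p : Equiv.Perm (Fin (n + 1)) // IsCyclicPerm p ∧ Avoids p ⇑q} :=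
  stmt19_general k q hinv hmax n hn
end
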